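/- arXiv:2102.06480 — 4 statements merged into one kernel-verified Lean document; each statement's English description precedes it below -/
import Mathlib

section
/- In a flow graph, for every path P = u_1,…,u_k the diverging and converging criteria for the excess flow agree: f(u_1,u_2) − Σ_{i=2}^{k−1} Σ_{v ≠ u_{i+1}} f(u_i,v) = f(u_{k−1},u_k) − Σ_{i=2}^{k−1} Σ_{v ≠ u_{i−1}} f(v,u_i), where the inner sums range over out-neighbours v of u_i (respectively in-neighbours v of u_i). -/
/-!
At an interior vertex `u_i` of the path, the sum of `f(u_i, x)` over `x ≠ u_{i+1}` is
`f_out(u_i) - f(u_i, u_{i+1})`, and by conservation the sum of `f(x, u_i)` over `x ≠ u_{i-1}` is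
`f_out(u_i) - f(u_{i-1}, u_i)`. After cancelling the `f_out` terms, both criteria become the
first (resp. last) edge flow plus the flows of the edges after (resp. before) the interior
vertices, i.e. the same sum over all edges of the path.
-/

/-- A flow graph: a finite DAG with at most one edge between any ordered pair of
vertices, where each edge carries a positive flow value, `f` is zero on non-edges,
and every vertex that is neither a source nor a sink satisfies flow conservation. -/
structure FlowGraph (V : Type) [Fintype V] [DecidableEq V] where
  E : V → V → Prop
  f : V → V → ℚ
  f_pos : ∀ u v, E u v → 0 < f u v
  f_eq_zero : ∀ u v, ¬ E u v → f u v = 0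
  acyclic : ∀ v : V, ¬ Relation.TransGen E v v
  conservation : ∀ v : V, (∃ u, E u v) → (∃ w, E v w) →
    (∑ u, f u v) = (∑ w, f v w)

namespace FlowGraph

variable {V : Type} [Fintype V] [DecidableEq V] (G : FlowGraph V)

/-- Total flow entering `v`. -/
def fin (v : V) : ℚ := ∑ u, G.f u v

/-- Total flow leaving `v`. -/
def fout (v : V) : ℚ := ∑ w, G.f v w

/-- A source has no incoming edges. -/
def IsSource (v : V) : Prop := ∀ u, ¬ G.E u v

/-- A sink has no outgoing edges. -/
def IsSink (v : V) : Prop := ∀ w, ¬ G.E v w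

/-- A path: a sequence of at least two vertices joined by edges. -/
def IsPath (p : List V) : Prop := 2 ≤ p.length ∧ p.Chain' G.E

/-- A path from a source of `G` to a sink of `G`. -/
def IsSourceSinkPath (p : List V) : Prop :=
  G.IsPath p ∧ (∀ s ∈ p.head?, G.IsSource s) ∧ (∀ t ∈ p.getLast?, G.IsSink t)

/-- Total weight of the decomposition entries whose path contains `p` as a
(contiguous) subpath. -/
def coverWeight (G : FlowGraph V) (p : List V) (D : List (List V × ℚ)) : ℚ :=
  (D.map (fun Pw => if p <:+: Pw.1 then Pw.2 else 0)).sum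

/-- A flow decomposition: a finite list of source-to-sink paths with positive
weights such that on every edge the weights of the paths through it sum to the flow. -/
def IsFlowDecomposition (D : List (List V × ℚ)) : Prop :=
  (∀ Pw ∈ D, G.IsSourceSinkPath Pw.1 ∧ 0 < Pw.2) ∧
  (∀ u v : V, G.E u v → G.coverWeight [u, v] D = G.f u v)

/-- `p` is `w`-safe: in every flow decomposition the total weight of the paths
containing `p` as a subpath is at least `w`. -/
def IsWSafe (p : List V) (w : ℚ) : Prop :=
  ∀ D, G.IsFlowDecomposition D → w ≤ G.coverWeight p D

/-- A safe path: a path that is `w`-safe for some `w > 0`. -/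
def IsSafe (p : List V) : Prop := G.IsPath p ∧ ∃ w : ℚ, 0 < w ∧ G.IsWSafe p w

/-- The excess flow of a path `u₁ … u_k` (diverging criterion):
`f(u₁,u₂) − Σ_{i=2}^{k−1} Σ_{x ≠ u_{i+1}} f(u_i, x)`. -/
def excess : List V → ℚ
  | u :: v :: rest =>
      G.f u v - (((v :: rest).zip rest).map
        (fun ab => ∑ x ∈ Finset.univ.erase ab.2, G.f ab.1 x)).sum
  | _ => 0

end FlowGraph

/-- Both sides equal `∑ i ∈ range (n + 1), g i`. -/
theorem Finset.add_sum_Ico_one_eq_add_sum_Ico_one_sub {M : Type*} [AddCommMonoid M]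
    (g : ℕ → M) (n : ℕ) :
    g 0 + ∑ i ∈ Finset.Ico 1 (n + 1), g i = g n + ∑ i ∈ Finset.Ico 1 (n + 1), g (i - 1) := by
  have hshift : ∑ i ∈ Finset.Ico 1 (n + 1), g (i - 1) = ∑ i ∈ Finset.range n, g i := by
    rw [Finset.range_eq_Ico, ← Finset.sum_Ico_add' (fun i => g (i - 1)) 0 n 1]
    simp only [Nat.add_sub_cancel]
  rw [hshift, add_comm (g n), ← Finset.sum_range_succ, Finset.range_eq_Ico,
    Finset.sum_eq_sum_Ico_succ_bot n.succ_pos]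

namespace FlowGraph

variable {V : Type} [Fintype V] [DecidableEq V] (G : FlowGraph V)

theorem sum_erase_f_eq_fout_sub (v w : V) :
    ∑ x ∈ Finset.univ.erase w, G.f v x = G.fout v - G.f v w :=
  Finset.sum_erase_eq_sub (Finset.mem_univ w)

theorem sum_erase_f_eq_fin_sub (v w : V) :
    ∑ x ∈ Finset.univ.erase w, G.f x v = G.fin v - G.f w v :=
  Finset.sum_erase_eq_sub (Finset.mem_univ w)

theorem fin_eq_fout_of_adj {u v w : V} (huv : G.E u v) (hvw : G.E v w) :
    G.fin v = G.fout v :=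
  G.conservation v ⟨u, huv⟩ ⟨w, hvw⟩

end FlowGraph

open FlowGraph in
/-- for every path `u 0, …, u (k-1)` in a flow graph, the diverging and
converging criteria for the excess flow agree. -/
theorem stmt_1 {V : Type} [Fintype V] [DecidableEq V] (G : FlowGraph V)
    (k : ℕ) (hk : 2 ≤ k) (u : ℕ → V) (hE : ∀ i < k - 1, G.E (u i) (u (i + 1))) :
    G.f (u 0) (u 1)
        - ∑ i ∈ Finset.Ico 1 (k - 1), ∑ x ∈ Finset.univ.erase (u (i + 1)), G.f (u i) x
      = G.f (u (k - 2)) (u (k - 1))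
        - ∑ i ∈ Finset.Ico 1 (k - 1), ∑ x ∈ Finset.univ.erase (u (i - 1)), G.f x (u i) := by
  obtain ⟨m, rfl⟩ : ∃ m, k = m + 2 := ⟨k - 2, by omega⟩
  simp only [Nat.add_sub_cancel, show m + 2 - 1 = m + 1 from rfl] at hE ⊢
  have hconserved : ∀ i ∈ Finset.Ico 1 (m + 1), G.fin (u i) = G.fout (u i) := by
    intro i hi
    obtain ⟨j, rfl⟩ : ∃ j, i = j + 1 := ⟨i - 1, by grind⟩
    exact G.fin_eq_fout_of_adj (hE j (by grind)) (hE (j + 1) (by grind))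
  have htelescope : G.f (u 0) (u 1) + ∑ i ∈ Finset.Ico 1 (m + 1), G.f (u i) (u (i + 1))
      = G.f (u m) (u (m + 1)) + ∑ i ∈ Finset.Ico 1 (m + 1), G.f (u (i - 1)) (u i) := by
    rw [Finset.add_sum_Ico_one_eq_add_sum_Ico_one_sub (fun i => G.f (u i) (u (i + 1)))]
    refine congrArg _ (Finset.sum_congr rfl fun i hi => ?_)
    rw [Nat.sub_add_cancel (Finset.mem_Ico.1 hi).1]
  simp only [G.sum_erase_f_eq_fout_sub, G.sum_erase_f_eq_fin_sub, Finset.sum_sub_distrib,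
    Finset.sum_congr rfl hconserved]
  linarith
end

section
/- In a flow graph, a path P is w-safe with w > 0 if and only if its excess flow satisfies f_P ≥ w > 0. -/
/-!
Write `P = u₁ … u_k`. A decomposition path through `u₁ … u_i` leaves the non-sink `u_i`, and the
paths leaving it towards `x ≠ u_{i+1}` carry at most `f(u_i, x)` in total. So extending the
prefix by `u_{i+1}` loses at most the flow leaving `u_i` elsewhere, and every decomposition puts
weight at least `f_P` on `P`.

Conversely, decompose greedily. As long as every edge of `P` carries flow and some flow can leave
`P` at an inner vertex, take the last such vertex `u_j`, route a source-to-sink path along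
`u₁ … u_j` and then off `P`, and peel it off with its bottleneck weight: `f_P` is unchanged and
the peeled path does not contain `P`. Once no flow can leave `P`, any decomposition puts weight at
most `f(u₁, u₂) = f_P` on `P`, or at most `0` once an edge of `P` is exhausted. So some
decomposition puts weight at most `max f_P 0` on `P`.
-/

namespace List

variable {α : Type*}

theorem Nodup.append_cons_inj {l s t s' t' : List α} {c : α} (hl : l.Nodup)
    (h : s ++ c :: t = l) (h' : s' ++ c :: t' = l) : s = s' ∧ t = t' := by
  classical
  subst h
  have hs : c ∉ s := fun hc => (nodup_append.mp hl).2.2 c hc c mem_cons_self rfl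
  have hs' : c ∉ s' := fun hc => (nodup_append.mp (h' ▸ hl)).2.2 c hc c mem_cons_self rfl
  have hlen : s.length = s'.length := by
    have := congrArg (idxOf c) h'
    simpa [idxOf_append_of_notMem hs, idxOf_append_of_notMem hs'] using this.symm
  obtain ⟨rfl, h⟩ := append_inj h'.symm hlen
  exact ⟨rfl, (cons.inj h).2⟩

theorem Nodup.eq_of_pair_infix_left {l : List α} {a b c : α} (hl : l.Nodup)
    (hb : [a, b] <:+: l) (hc : [a, c] <:+: l) : b = c := by
  obtain ⟨s, t, hst⟩ := hb
  obtain ⟨s', t', hst'⟩ := hc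
  have := (hl.append_cons_inj (s := s) (t := b :: t) (s' := s') (t' := c :: t')
    (by simpa using hst) (by simpa using hst')).2
  exact (cons.inj this).1

theorem Nodup.eq_of_pair_infix_right {l : List α} {a b c : α} (hl : l.Nodup)
    (ha : [a, c] <:+: l) (hb : [b, c] <:+: l) : a = b := by
  obtain ⟨s, t, hst⟩ := ha
  obtain ⟨s', t', hst'⟩ := hb
  have := (hl.append_cons_inj (s := s ++ [a]) (t := t) (s' := s' ++ [b]) (t' := t')
    (by simpa using hst) (by simpa using hst')).1
  exact (cons.inj (append_inj' this rfl).2).1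

theorem exists_append_singleton_infix {q l : List α} (h : q <:+: l) (hq : q ≠ [])
    (hlast : l.getLast? ≠ q.getLast?) : ∃ x, q ++ [x] <:+: l := by
  obtain ⟨s, t, rfl⟩ := h
  cases t with
  | nil => simp [getLast?_append_of_ne_nil _ hq] at hlast
  | cons x t => exact ⟨x, s, t, by simp⟩

theorem exists_pair_infix_of_mem {l : List α} {v : α} (hv : v ∈ l) (hhead : l.head? ≠ some v) :
    ∃ u, [u, v] <:+: l := by
  obtain ⟨s, t, rfl⟩ := append_of_mem hv
  rcases eq_nil_or_concat' s with rfl | ⟨s, u, rfl⟩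
  · simp at hhead
  · exact ⟨u, s, t, by simp⟩

theorem exists_last_rel_pair {R : α → α → Prop} :
    ∀ {l : List α}, (∃ a b, [a, b] <:+: l ∧ R a b) →
      ∃ s y z t, l = s ++ y :: z :: t ∧ R y z ∧ ∀ a b, [a, b] <:+: z :: t → ¬ R a b
  | [], ⟨a, b, h, _⟩ => by simpa using h.length_le
  | c :: l, ⟨a, b, h, hab⟩ => by
    by_cases hl : ∃ a b, [a, b] <:+: l ∧ R a b
    · obtain ⟨s, y, z, t, rfl, hyz, hlast⟩ := exists_last_rel_pair hl
      exact ⟨c :: s, y, z, t, rfl, hyz, hlast⟩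
    · push Not at hl
      rcases infix_cons_iff.mp h with h | h
      · obtain ⟨t, ht⟩ := h
        cases l with
        | nil => simp at ht
        | cons d l =>
          simp only [cons_append, cons.injEq] at ht
          obtain ⟨rfl, rfl, -⟩ := ht
          exact ⟨[], a, b, l, rfl, hab, hl⟩
      · exact absurd hab (hl a b h)

end List

namespace FlowGraph

open Finset Relation

variable {V : Type} [Fintype V] [DecidableEq V] (G : FlowGraph V)

instance : Std.Irrefl (TransGen G.E) := ⟨G.acyclic⟩

theorem wellFounded_transGen : WellFounded (TransGen G.E) :=
  Finite.wellFounded_of_trans_of_irrefl _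

theorem wellFounded_transGen_swap : WellFounded (Function.swap (TransGen G.E)) :=
  Finite.wellFounded_of_trans_of_irrefl _

theorem nodup_of_isChain {l : List V} (hl : l.IsChain G.E) : l.Nodup :=
  (List.isChain_iff_pairwise.mp (hl.imp fun _ _ => TransGen.single)).imp
    fun {a _} h => by rintro rfl; exact G.acyclic a h

structure IsFlow (g : V → V → ℚ) : Prop where
  nonneg : ∀ u v, 0 ≤ g u v
  edge_of_pos : ∀ u v, 0 < g u v → G.E u v
  conservation : ∀ v, (∃ u, G.E u v) → (∃ w, G.E v w) → ∑ u, g u v = ∑ w, g v w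

theorem isFlow_f : G.IsFlow G.f where
  nonneg u v := by
    by_cases h : G.E u v
    · exact (G.f_pos u v h).le
    · exact (G.f_eq_zero u v h).ge
  edge_of_pos u v h := by
    by_contra he
    exact h.ne' (G.f_eq_zero u v he)
  conservation := G.conservation

def pathFlow (P : List V) (w : ℚ) (u v : V) : ℚ := if [u, v] <:+: P then w else 0

def positiveEdges (g : V → V → ℚ) : Finset (V × V) := univ.filter fun e => 0 < g e.1 e.2

def IsDecompositionOf (g : V → V → ℚ) (D : List (List V × ℚ)) : Prop :=
  (∀ Pw ∈ D, G.IsSourceSinkPath Pw.1 ∧ 0 < Pw.2) ∧ ∀ u v, G.coverWeight [u, v] D = g u v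

def leak (g : V → V → ℚ) (y z : V) : ℚ := ∑ x ∈ univ.erase z, g y x

def leakAlong (g : V → V → ℚ) : List V → ℚ
  | y :: z :: t => leak g y z + leakAlong g (z :: t)
  | _ => 0

def excessOf (g : V → V → ℚ) : List V → ℚ
  | u :: v :: t => g u v - leakAlong g (v :: t)
  | _ => 0

variable {G}

theorem IsSourceSinkPath.nodup {P : List V} (hP : G.IsSourceSinkPath P) : P.Nodup :=
  G.nodup_of_isChain hP.1.2

theorem sum_pathFlow_out {P : List V} (hP : P.Nodup) (w : ℚ) {v x : V} (h : [v, x] <:+: P) :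
    ∑ y, pathFlow P w v y = w := by
  refine (sum_eq_single x (fun y _ hy => ?_) (by simp)).trans (if_pos h)
  exact if_neg fun h' => hy (hP.eq_of_pair_infix_left h' h)

theorem sum_pathFlow_in {P : List V} (hP : P.Nodup) (w : ℚ) {u v : V} (h : [u, v] <:+: P) :
    ∑ y, pathFlow P w y v = w := by
  refine (sum_eq_single u (fun y _ hy => ?_) (by simp)).trans (if_pos h)
  exact if_neg fun h' => hy (hP.eq_of_pair_infix_right h' h)

namespace IsFlow

variable {g : V → V → ℚ}

theorem exists_pos_in (hg : G.IsFlow g) {v x : V} (hv : ¬ G.IsSource v) (hx : 0 < g v x) :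
    ∃ u, 0 < g u v := by
  simp only [IsSource, not_forall, not_not] at hv
  have hout : 0 < ∑ w, g v w :=
    hx.trans_le (single_le_sum (fun w _ => hg.nonneg v w) (mem_univ x))
  rw [← hg.conservation v hv ⟨x, hg.edge_of_pos v x hx⟩] at hout
  obtain ⟨u, -, hu⟩ := (sum_pos_iff_of_nonneg fun u _ => hg.nonneg u v).mp hout
  exact ⟨u, hu⟩

theorem exists_pos_out (hg : G.IsFlow g) {u v : V} (hv : ¬ G.IsSink v) (hu : 0 < g u v) :
    ∃ x, 0 < g v x := by
  simp only [IsSink, not_forall, not_not] at hv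
  have hin : 0 < ∑ u, g u v :=
    hu.trans_le (single_le_sum (fun u _ => hg.nonneg u v) (mem_univ u))
  rw [hg.conservation v ⟨u, hg.edge_of_pos u v hu⟩ hv] at hin
  obtain ⟨x, -, hx⟩ := (sum_pos_iff_of_nonneg fun x _ => hg.nonneg v x).mp hin
  exact ⟨x, hx⟩

theorem exists_source_prepend (hg : G.IsFlow g) (c : V) :
    ∀ q : List V, q ≠ [] → (c :: q).IsChain (0 < g · ·) →
      ∃ B : List V, (B ++ c :: q).IsChain (0 < g · ·) ∧
        ∀ s ∈ (B ++ c :: q).head?, G.IsSource s := by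
  induction c using G.wellFounded_transGen.induction with
  | _ c ih =>
  intro q hq hc
  by_cases hs : G.IsSource c
  · exact ⟨[], hc, by simpa using hs⟩
  obtain ⟨d, q', rfl⟩ := List.exists_cons_of_ne_nil hq
  obtain ⟨u, hu⟩ := hg.exists_pos_in hs (List.isChain_cons_cons.mp hc).1
  obtain ⟨B, hB, hBs⟩ := ih u (TransGen.single (hg.edge_of_pos u c hu)) (c :: d :: q')
    (List.cons_ne_nil _ _) (.cons_cons hu hc)
  exact ⟨B ++ [u], by simpa using hB, by simpa using hBs⟩

theorem exists_sink_append (hg : G.IsFlow g) (c : V) :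
    ∀ q : List V, q ≠ [] → (q ++ [c]).IsChain (0 < g · ·) →
      ∃ F : List V, (q ++ c :: F).IsChain (0 < g · ·) ∧
        ∀ t ∈ (q ++ c :: F).getLast?, G.IsSink t := by
  induction c using G.wellFounded_transGen_swap.induction with
  | _ c ih =>
  intro q hq hc
  by_cases hs : G.IsSink c
  · exact ⟨[], hc, by simpa using hs⟩
  obtain ⟨q', d, rfl⟩ := (List.eq_nil_or_concat' q).resolve_left hq
  obtain ⟨-, hdc⟩ : (q' ++ [d]).IsChain (0 < g · ·) ∧ 0 < g d c := by simpa using hc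
  obtain ⟨x, hx⟩ := hg.exists_pos_out hs hdc
  obtain ⟨F, hF, hFs⟩ := ih x (TransGen.single (hg.edge_of_pos c x hx)) (q' ++ [d, c])
    (by simp) (by simpa [and_assoc] using And.intro hc hx)
  exact ⟨x :: F, by simpa using hF, by simpa using hFs⟩

theorem exists_sourceSinkPath_infix (hg : G.IsFlow g) {q : List V}
    (hq : q.IsChain (0 < g · ·)) (hlen : 2 ≤ q.length) :
    ∃ P, G.IsSourceSinkPath P ∧ P.IsChain (0 < g · ·) ∧ q <:+: P := by
  obtain ⟨a, q₁, rfl⟩ := List.exists_cons_of_ne_nil (l := q) (by rintro rfl; simp at hlen)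
  obtain ⟨q₂, c, rfl⟩ := (List.eq_nil_or_concat' q₁).resolve_left (by rintro rfl; simp at hlen)
  obtain ⟨B, hB, hBs⟩ := hg.exists_source_prepend a (q₂ ++ [c]) (by simp) hq
  obtain ⟨F, hF, hFs⟩ := hg.exists_sink_append c (B ++ a :: q₂) (by simp) (by simpa using hB)
  refine ⟨B ++ a :: q₂ ++ c :: F, ⟨⟨?_, hF.imp hg.edge_of_pos⟩, ?_, hFs⟩, hF, B, F, by simp⟩
  · simp
    omega
  · simpa using hBs

theorem sub_pathFlow (hg : G.IsFlow g) {P : List V} {w : ℚ} (hP : G.IsSourceSinkPath P)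
    (hw : ∀ u v, [u, v] <:+: P → w ≤ g u v) : G.IsFlow (g - pathFlow P w) where
  nonneg u v := by
    by_cases h : [u, v] <:+: P <;> simp [pathFlow, h, hw, hg.nonneg]
  edge_of_pos u v huv := by
    by_cases h : [u, v] <:+: P
    · exact (List.isChain_cons_cons.mp (hP.1.2.infix h)).1
    · exact hg.edge_of_pos u v (by simpa [pathFlow, h] using huv)
  conservation v hin hout := by
    simp only [Pi.sub_apply, sum_sub_distrib, hg.conservation v hin hout, sub_right_inj]
    by_cases hv : v ∈ P
    · -- `v` is neither the first (a source) nor the last (a sink) vertex of `P`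
      obtain ⟨u, hu⟩ : ∃ u, [u, v] <:+: P := List.exists_pair_infix_of_mem hv fun h =>
        hin.elim fun u hu => hP.2.1 v h u hu
      obtain ⟨x, hx⟩ : ∃ x, [v] ++ [x] <:+: P := List.exists_append_singleton_infix
        ((List.singleton_infix_iff v P).mpr hv) (by simp) fun h =>
          hout.elim fun x hx => hP.2.2 v (by simpa using h) x hx
      rw [sum_pathFlow_in hP.nodup w hu, sum_pathFlow_out hP.nodup w hx]
    · have hzero : ∀ a b, a = v ∨ b = v → pathFlow P w a b = 0 := fun a b hab =>
        if_neg fun h => hv (by rcases hab with rfl | rfl <;> exact h.subset (by simp))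
      rw [sum_eq_zero fun u _ => hzero u v (.inr rfl), sum_eq_zero fun x _ => hzero v x (.inl rfl)]

theorem exists_sub_pathFlow (hg : G.IsFlow g) {P : List V} (hP : G.IsSourceSinkPath P)
    (hpos : P.IsChain (0 < g · ·)) :
    ∃ w, 0 < w ∧ G.IsFlow (g - pathFlow P w) ∧
      (positiveEdges (g - pathFlow P w)).card < (positiveEdges g).card := by
  set edges := univ.filter fun e : V × V => [e.1, e.2] <:+: P
  have hne : edges.Nonempty := by
    obtain ⟨a, b, t, rfl⟩ : ∃ a b t, P = a :: b :: t := match P, hP.1.1 with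
      | a :: b :: t, _ => ⟨a, b, t, rfl⟩
    exact ⟨(a, b), mem_filter.mpr ⟨mem_univ _, [], t, rfl⟩⟩
  -- peeling off the bottleneck value of `g` along `P` empties the bottleneck edge
  obtain ⟨e, he, hmin⟩ := exists_min_image edges (fun e => g e.1 e.2) hne
  have he : [e.1, e.2] <:+: P := by simpa [edges] using he
  have hw : 0 < g e.1 e.2 := (List.isChain_cons_cons.mp (hpos.infix he)).1
  refine ⟨g e.1 e.2, hw, hg.sub_pathFlow hP fun u v huv => hmin (u, v) (by simpa [edges]), ?_⟩
  refine card_lt_card ⟨fun d hd => ?_, fun hsub => ?_⟩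
  · simp only [positiveEdges, mem_filter, mem_univ, true_and, Pi.sub_apply] at hd ⊢
    by_cases h : [d.1, d.2] <:+: P <;> simp only [pathFlow, h, if_true, if_false] at hd <;>
      linarith
  · have := hsub (by simpa [positiveEdges] using hw)
    simp [positiveEdges, pathFlow, he] at this

end IsFlow

@[simp]
theorem coverWeight_cons (p P : List V) (w : ℚ) (D : List (List V × ℚ)) :
    G.coverWeight p ((P, w) :: D) = (if p <:+: P then w else 0) + G.coverWeight p D := by
  simp [coverWeight]

theorem coverWeight_eq_zero {p : List V} {D : List (List V × ℚ)}
    (h : ∀ Pw ∈ D, ¬ p <:+: Pw.1) : G.coverWeight p D = 0 :=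
  List.sum_eq_zero fun x hx => by
    obtain ⟨Pw, hPw, rfl⟩ := List.mem_map.mp hx
    exact if_neg (h Pw hPw)

theorem coverWeight_le_of_infix {p q : List V} {D : List (List V × ℚ)}
    (hD : ∀ Pw ∈ D, 0 ≤ Pw.2) (h : p <:+: q) : G.coverWeight q D ≤ G.coverWeight p D :=
  List.sum_le_sum fun Pw hPw => by
    by_cases hq : q <:+: Pw.1
    · simp [hq, h.trans hq]
    · simp only [hq, if_false]
      split_ifs
      exacts [hD Pw hPw, le_rfl]

theorem coverWeight_eq_sum_concat {D : List (List V × ℚ)}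
    (hD : ∀ Pw ∈ D, G.IsSourceSinkPath Pw.1) (s : List V) {y : V} (hy : ¬ G.IsSink y) :
    G.coverWeight (s ++ [y]) D = ∑ x, G.coverWeight (s ++ [y, x]) D := by
  induction D with
  | nil => exact sum_const_zero.symm
  | cons Pw D ih =>
    obtain ⟨P, w⟩ := Pw
    have hP := hD (P, w) List.mem_cons_self
    have hsplit : (if s ++ [y] <:+: P then w else 0) =
        ∑ x, if s ++ [y, x] <:+: P then w else 0 := by
      by_cases hq : s ++ [y] <:+: P
      · -- a path through `s ++ [y]` continues, as `y` is not a sink, to a unique vertex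
        obtain ⟨x, hx⟩ := List.exists_append_singleton_infix hq (by simp) fun h =>
          hy (hP.2.2 y (by simpa using h))
        simp only [List.append_assoc, List.singleton_append] at hx
        rw [if_pos hq, sum_eq_single x ?_ (fun h => absurd (mem_univ x) h), if_pos hx]
        refine fun x' _ hx' => if_neg fun h' => hx' ?_
        exact hP.nodup.eq_of_pair_infix_left ((List.suffix_append s _).isInfix.trans h')
          ((List.suffix_append s _).isInfix.trans hx)
      · rw [if_neg hq, eq_comm]
        exact sum_eq_zero fun x _ => if_neg fun h =>
          hq <| (List.prefix_append (s ++ [y]) [x]).isInfix.trans (by simpa using h)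
    rw [coverWeight_cons, hsplit, ih fun Pw h => hD Pw (List.mem_cons_of_mem _ h),
      ← sum_add_distrib]
    simp

theorem IsDecompositionOf.cons {g : V → V → ℚ} {P : List V} {w : ℚ} {D : List (List V × ℚ)}
    (hD : G.IsDecompositionOf (g - pathFlow P w) D) (hP : G.IsSourceSinkPath P) (hw : 0 < w) :
    G.IsDecompositionOf g ((P, w) :: D) := by
  refine ⟨fun Pw hPw => ?_, fun u v => ?_⟩
  · rcases List.mem_cons.mp hPw with rfl | h
    exacts [⟨hP, hw⟩, hD.1 Pw h]
  · rw [coverWeight_cons, hD.2 u v, Pi.sub_apply]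
    exact add_sub_cancel _ _

theorem IsFlow.exists_isDecompositionOf {g : V → V → ℚ} (hg : G.IsFlow g) :
    ∃ D, G.IsDecompositionOf g D := by
  induction hn : (positiveEdges g).card using Nat.strong_induction_on generalizing g with
  | _ n ih =>
  by_cases hpos : ∃ u v, 0 < g u v
  · obtain ⟨u, v, huv⟩ := hpos
    obtain ⟨P, hP, hPpos, -⟩ := hg.exists_sourceSinkPath_infix (q := [u, v]) (by simpa) le_rfl
    obtain ⟨w, hw, hg', hcard⟩ := hg.exists_sub_pathFlow hP hPpos
    obtain ⟨D, hD⟩ := ih _ (hn ▸ hcard) hg' rfl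
    exact ⟨(P, w) :: D, hD.cons hP hw⟩
  · push Not at hpos
    exact ⟨[], by simp, fun u v => (le_antisymm (hpos u v) (hg.nonneg u v)).symm⟩

variable (G) in
theorem isFlowDecomposition_iff {D : List (List V × ℚ)} :
    G.IsFlowDecomposition D ↔ G.IsDecompositionOf G.f D := by
  refine ⟨fun hD => ⟨hD.1, fun u v => ?_⟩, fun hD => ⟨hD.1, fun u v _ => hD.2 u v⟩⟩
  by_cases h : G.E u v
  · exact hD.2 u v h
  · rw [G.f_eq_zero u v h]
    exact coverWeight_eq_zero fun Pw hPw hinf =>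
      h (List.isChain_cons_cons.mp ((hD.1 Pw hPw).1.1.2.infix hinf)).1

variable (G) in
theorem excess_eq_excessOf (p : List V) : G.excess p = excessOf G.f p := by
  have hzip : ∀ (t : List V) (v : V),
      (((v :: t).zip t).map fun ab => ∑ x ∈ univ.erase ab.2, G.f ab.1 x).sum =
        leakAlong G.f (v :: t) := by
    intro t
    induction t with
    | nil => simp [leakAlong]
    | cons z t ih => intro v; simp [leakAlong, leak, ← ih]
  match p with
  | [] | [_] => rfl
  | u :: v :: t => simp only [excess, excessOf, hzip]

theorem leakAlong_append_cons (g : V → V → ℚ) :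
    ∀ (s : List V) (y : V) (t : List V),
      leakAlong g (s ++ y :: t) = leakAlong g (s ++ [y]) + leakAlong g (y :: t)
  | [], _, _ => by simp [leakAlong]
  | [_], _, _ => by simp [leakAlong]
  | c :: d :: s, y, t => by
    simp only [List.cons_append, leakAlong]
    rw [← List.cons_append, leakAlong_append_cons g (d :: s) y t, List.cons_append, add_assoc]

theorem leakAlong_eq_zero {g : V → V → ℚ} :
    ∀ {l : List V}, (∀ u v, [u, v] <:+: l → leak g u v = 0) → leakAlong g l = 0
  | [], _ | [_], _ => rfl
  | u :: v :: t, h => by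
    rw [leakAlong, h u v ⟨[], t, rfl⟩, leakAlong_eq_zero fun a b hab => h a b
      (hab.trans (List.suffix_cons _ _).isInfix), add_zero]

theorem excessOf_append_cons (g : V → V → ℚ) {s : List V} (hs : s ≠ []) (y : V) (t : List V) :
    excessOf g (s ++ y :: t) = excessOf g (s ++ [y]) - leakAlong g (y :: t) := by
  obtain ⟨a, s, rfl⟩ := List.exists_cons_of_ne_nil hs
  cases s with
  | nil => simp [excessOf, leakAlong]
  | cons b s =>
    simp only [List.cons_append, excessOf]
    rw [← List.cons_append, leakAlong_append_cons, List.cons_append]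
    ring

theorem excessOf_sub (g h : V → V → ℚ) (p : List V) :
    excessOf (g - h) p = excessOf g p - excessOf h p := by
  have hleak : ∀ l : List V, leakAlong (g - h) l = leakAlong g l - leakAlong h l := by
    intro l
    induction l with
    | nil => simp [leakAlong]
    | cons y t ih =>
      cases t with
      | nil => simp [leakAlong]
      | cons z t => simp only [leakAlong, ih, leak, Pi.sub_apply, sum_sub_distrib]; ring
  match p with
  | [] | [_] => simp [excessOf]
  | u :: v :: t => simp only [excessOf, hleak, Pi.sub_apply]; ring

theorem IsDecompositionOf.coverWeight_sub_leak_le {g : V → V → ℚ} {D : List (List V × ℚ)}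
    (hD : G.IsDecompositionOf g D) (s : List V) {y z : V} (hyz : G.E y z) :
    G.coverWeight (s ++ [y]) D - leak g y z ≤ G.coverWeight (s ++ [y, z]) D := by
  rw [coverWeight_eq_sum_concat (fun Pw h => (hD.1 Pw h).1) s fun h => h z hyz,
    ← add_sum_erase _ _ (mem_univ z)]
  have hle : ∀ x, G.coverWeight (s ++ [y, x]) D ≤ g y x := fun x =>
    (coverWeight_le_of_infix (fun Pw h => (hD.1 Pw h).2.le)
      (List.suffix_append s _).isInfix).trans_eq (hD.2 y x)
  have := sum_le_sum fun x (_ : x ∈ univ.erase z) => hle x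
  rw [leak]
  linarith

theorem IsDecompositionOf.excessOf_le_coverWeight {g : V → V → ℚ} {D : List (List V × ℚ)}
    (hD : G.IsDecompositionOf g D) {p : List V} (hp : G.IsPath p) :
    excessOf g p ≤ G.coverWeight p D := by
  induction p using List.reverseRecOn with
  | nil => simp [IsPath] at hp
  | append_singleton q z ih =>
    rcases List.eq_nil_or_concat' q with rfl | ⟨s, y, rfl⟩
    · simp [IsPath] at hp
    obtain ⟨hlen, hchain⟩ := hp
    rcases eq_or_ne s [] with rfl | hs
    · simp [excessOf, leakAlong, hD.2]
    have hyz : G.E y z := by simpa using (List.isChain_append.mp hchain).2.2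
    have hq := ih ⟨by have := List.length_pos_iff.mpr hs; simp; omega, hchain.left_of_append⟩
    rw [List.append_assoc, List.singleton_append, excessOf_append_cons g hs]
    simp only [leakAlong, add_zero]
    linarith [hD.coverWeight_sub_leak_le s hyz]

theorem leak_pathFlow_of_infix {P : List V} (hP : P.Nodup) (w : ℚ) {u v : V}
    (h : [u, v] <:+: P) : leak (pathFlow P w) u v = 0 :=
  sum_eq_zero fun _ hx => if_neg fun h' => (mem_erase.mp hx).1 (hP.eq_of_pair_infix_left h' h)

theorem leak_pathFlow_of_ne {P : List V} (hP : P.Nodup) (w : ℚ) {u v x : V}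
    (h : [u, x] <:+: P) (hx : x ≠ v) : leak (pathFlow P w) u v = w := by
  rw [leak, sum_eq_single_of_mem x (mem_erase.mpr ⟨hx, mem_univ x⟩) fun x' _ hx' => ?_]
  · exact if_pos h
  · exact if_neg fun h' => hx' (hP.eq_of_pair_infix_left h' h)

theorem leak_pathFlow_of_not_pos {g : V → V → ℚ} (hg : ∀ u v, 0 ≤ g u v) {P : List V}
    (hpos : P.IsChain (0 < g · ·)) (w : ℚ) {u v : V} (h : ¬ 0 < leak g u v) :
    leak (pathFlow P w) u v = 0 :=
  sum_eq_zero fun _ hx => if_neg fun hux =>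
    h <| (List.isChain_cons_cons.mp (hpos.infix hux)).1.trans_le <|
      single_le_sum (fun x _ => hg u x) hx

theorem excessOf_pathFlow_of_infix {P q : List V} (hP : P.Nodup) (w : ℚ) (hq : q <:+: P)
    (hlen : 2 ≤ q.length) : excessOf (pathFlow P w) q = w := by
  obtain ⟨a, b, t, rfl⟩ : ∃ a b t, q = a :: b :: t := match q, hlen with
    | a :: b :: t, _ => ⟨a, b, t, rfl⟩
  rw [excessOf, leakAlong_eq_zero fun u v huv => leak_pathFlow_of_infix hP w
    (huv.trans ((List.suffix_cons a _).isInfix.trans hq)), sub_zero]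
  exact if_pos ((List.prefix_append [a, b] t).isInfix.trans hq)

-- `P` follows `p` up to `y`, escapes along `(y, x)` and uses no escape edge of `p` after `y`:
-- along `p` it carries `w` on the first edge and leaks `w` at `y` only.
theorem excessOf_pathFlow_of_escape {g : V → V → ℚ} (hg : ∀ u v, 0 ≤ g u v) {P : List V}
    (hP : P.Nodup) (hpos : P.IsChain (0 < g · ·)) (w : ℚ) {a y z x : V} {s t : List V}
    (hesc : a :: s ++ [y, x] <:+: P) (hxz : x ≠ z)
    (hlate : ∀ u v, [u, v] <:+: z :: t → ¬ 0 < leak g u v) :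
    excessOf (pathFlow P w) (a :: s ++ y :: z :: t) = 0 := by
  have hprefix : a :: s ++ [y] <:+: P :=
    (List.prefix_append (a :: s ++ [y]) [x]).isInfix.trans (by simpa using hesc)
  rw [excessOf_append_cons _ (List.cons_ne_nil a s), excessOf_pathFlow_of_infix hP w hprefix
    (by simp), leakAlong, leak_pathFlow_of_ne hP w ((List.suffix_append _ _).isInfix.trans hesc)
    hxz, leakAlong_eq_zero fun u v huv => leak_pathFlow_of_not_pos hg hpos w (hlate u v huv)]
  ring

theorem IsDecompositionOf.coverWeight_nonpos_of_not_isChain {g : V → V → ℚ}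
    {D : List (List V × ℚ)} (hD : G.IsDecompositionOf g D) {p : List V}
    (hp : ¬ p.IsChain (0 < g · ·)) : G.coverWeight p D ≤ 0 := by
  obtain ⟨c, d, ⟨s, t, rfl⟩, hcd⟩ :
      ∃ c d, (∃ s t, p = s ++ c :: d :: t) ∧ ¬ 0 < g c d := by
    simpa [List.isChain_iff_forall_rel_of_append_cons_cons] using hp
  have hcdp : [c, d] <:+: s ++ c :: d :: t := ⟨s, t, by simp⟩
  refine (coverWeight_le_of_infix (fun Pw h => (hD.1 Pw h).2.le) hcdp).trans ?_
  rw [hD.2]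
  exact not_lt.mp hcd

theorem IsDecompositionOf.coverWeight_le_of_not_leak {g : V → V → ℚ} (hg : G.IsFlow g)
    {D : List (List V × ℚ)} (hD : G.IsDecompositionOf g D) {a b : V} {l : List V}
    (hl : ∀ u v, [u, v] <:+: b :: l → ¬ 0 < leak g u v) :
    G.coverWeight (a :: b :: l) D ≤ excessOf g (a :: b :: l) := by
  have hleak : leakAlong g (b :: l) = 0 := leakAlong_eq_zero fun u v h =>
    (not_lt.mp (hl u v h)).antisymm (sum_nonneg fun x _ => hg.nonneg u x)
  have habp : [a, b] <:+: a :: b :: l := ⟨[], l, rfl⟩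
  refine (coverWeight_le_of_infix (fun Pw h => (hD.1 Pw h).2.le) habp).trans ?_
  rw [hD.2, excessOf, hleak, sub_zero]

theorem IsFlow.exists_isDecompositionOf_coverWeight_le {p : List V} (hp : 2 ≤ p.length)
    {g : V → V → ℚ} (hg : G.IsFlow g) :
    ∃ D, G.IsDecompositionOf g D ∧ G.coverWeight p D ≤ max (excessOf g p) 0 := by
  induction hn : (positiveEdges g).card using Nat.strong_induction_on generalizing g with
  | _ n ih =>
  obtain ⟨a, b, l, rfl⟩ : ∃ a b l, p = a :: b :: l := match p, hp with
    | a :: b :: l, _ => ⟨a, b, l, rfl⟩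
  obtain ⟨D, hD⟩ := hg.exists_isDecompositionOf
  by_cases hpos : (a :: b :: l).IsChain (0 < g · ·)
  swap
  · exact ⟨D, hD, (hD.coverWeight_nonpos_of_not_isChain hpos).trans (le_max_right _ _)⟩
  by_cases hesc : ∃ u v, [u, v] <:+: b :: l ∧ 0 < leak g u v
  swap
  · push Not at hesc
    exact ⟨D, hD, (hD.coverWeight_le_of_not_leak hg fun u v h => (hesc u v h).not_gt).trans
      (le_max_left _ _)⟩
  -- route flow along `p` up to the last vertex `y` where some of it can leave `p`
  obtain ⟨s, y, z, t, hbl, hyz, hlate⟩ := List.exists_last_rel_pair hesc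
  rw [leak] at hyz
  obtain ⟨x, hx, hyx⟩ := (sum_pos_iff_of_nonneg fun x _ => hg.nonneg y x).mp hyz
  have hxz : x ≠ z := (mem_erase.mp hx).1
  have hp : a :: b :: l = a :: s ++ y :: z :: t := by rw [hbl]; rfl
  have hescChain : (a :: s ++ [y, x]).IsChain (0 < g · ·) :=
    List.isChain_append_cons_cons.mpr
      ⟨(List.isChain_append_cons_cons.mp (hp ▸ hpos)).1, hyx, .singleton x⟩
  obtain ⟨P, hP, hPpos, hescP⟩ := hg.exists_sourceSinkPath_infix hescChain (by simp)
  obtain ⟨w, hw, hg', hcard⟩ := hg.exists_sub_pathFlow hP hPpos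
  obtain ⟨D', hD', hcw⟩ := ih _ (hn ▸ hcard) hg' rfl
  have hyzp : [y, z] <:+: a :: s ++ y :: z :: t := ⟨a :: s, t, by simp⟩
  have hnot : ¬ a :: s ++ y :: z :: t <:+: P := fun h => hxz <|
    hP.nodup.eq_of_pair_infix_left ((List.suffix_append _ _).isInfix.trans hescP) (hyzp.trans h)
  refine ⟨(P, w) :: D', hD'.cons hP hw, ?_⟩
  rw [hp] at hcw ⊢
  rw [excessOf_sub, excessOf_pathFlow_of_escape hg.nonneg hP.nodup hPpos w hescP hxz hlate,
    sub_zero] at hcw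
  rwa [coverWeight_cons, if_neg hnot, zero_add]

end FlowGraph

open FlowGraph in
/-- in a flow graph, a path `P` is `w`-safe with `w > 0` if and only if its
excess flow satisfies `f_P ≥ w > 0`. -/
theorem stmt_2 {V : Type} [Fintype V] [DecidableEq V] (G : FlowGraph V)
    (p : List V) (hp : G.IsPath p) (w : ℚ) (hw : 0 < w) :
    G.IsWSafe p w ↔ w ≤ G.excess p := by
  rw [excess_eq_excessOf]
  refine ⟨fun hsafe => ?_, fun hle D hD => ?_⟩
  · obtain ⟨D, hD, hcw⟩ := G.isFlow_f.exists_isDecompositionOf_coverWeight_le hp.1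
    by_contra hlt
    have := hsafe D ((isFlowDecomposition_iff G).mpr hD)
    linarith [max_lt (not_le.mp hlt) hw]
  · exact hle.trans (((isFlowDecomposition_iff G).mp hD).excessOf_le_coverWeight hp)
end

section
/- In a flow graph, let P be a safe path starting with edge e = (u_1,u_2), and let e* = (x,u_2) be any edge entering u_2 with f(e*) ≥ f(e) (in particular, an edge of maximum flow among the edges entering u_2). Then the path obtained from P by replacing e with e* is also safe, and its excess flow equals f_P − f(e) + f(e*) ≥ f_P > 0. Symmetrically, if P is a safe path ending with edge e = (u_{k−1},u_k) and e* = (u_{k−1},y) is any edge leaving u_{k−1} with f(e*) ≥ f(e), then the path obtained from P by replacing e with e* is also safe, with excess flow f_P − f(e) + f(e*) ≥ f_P > 0. -/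
set_option linter.unusedSectionVars false
set_option maxHeartbeats 4000000

section ListHelpers
variable {α : Type*} [DecidableEq α]

theorem gstr {p A B : List α} (h : p <:+: (A ++ B)) :
    p <:+: A ∨ p <:+: B ∨ ∃ p₁ p₂, p = p₁ ++ p₂ ∧ p₁ ≠ [] ∧ p₂ ≠ [] ∧ p₁ <:+ A ∧ p₂ <+: B := by
  obtain ⟨s, t, hst⟩ := h
  have h1 : A ++ B = s ++ (p ++ t) := by rw [← hst]; simp [List.append_assoc]
  rcases List.append_eq_append_iff.mp h1 with ⟨a', hs, hB⟩ | ⟨c', hA, hpt⟩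
  · exact Or.inr (Or.inl ⟨a', t, by rw [hB]; simp [List.append_assoc]⟩)
  · rcases List.append_eq_append_iff.mp hpt with ⟨a', hc', ht⟩ | ⟨c₂, hp, hBc⟩
    · left; exact ⟨s, a', by rw [hA, hc']; simp [List.append_assoc]⟩
    · rcases eq_or_ne c' [] with rfl | hc'ne
      · right; left; exact ⟨[], t, by simp at hp; rw [hBc, hp]; simp⟩
      · rcases eq_or_ne c₂ [] with rfl | hc₂ne
        · left; refine ⟨s, [], ?_⟩
          simp at hp ⊢; rw [hA, hp]
        · exact Or.inr (Or.inr ⟨c', c₂, hp, hc'ne, hc₂ne, ⟨s, hA.symm⟩, ⟨t, hBc.symm⟩⟩)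

theorem exists_list_min {l : List ℚ} (h : l ≠ []) : ∃ m ∈ l, ∀ x ∈ l, m ≤ x := by
  induction l with
  | nil => simp at h
  | cons a l ih =>
    rcases eq_or_ne l [] with rfl | hl
    · exact ⟨a, by simp⟩
    · obtain ⟨m, hm, hle⟩ := ih hl
      rcases le_total a m with h' | h'
      · exact ⟨a, by simp, by intro x hx; rcases List.mem_cons.mp hx with rfl | hx; exacts [le_refl _, h'.trans (hle x hx)]⟩
      · exact ⟨m, List.mem_cons_of_mem _ hm, by intro x hx; rcases List.mem_cons.mp hx with rfl | hx; exacts [h', hle x hx]⟩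

theorem split_unique {l A B A' B' : List α} {v : α} (hnd : l.Nodup)
    (h1 : l = A ++ v :: B) (h2 : l = A' ++ v :: B') : A = A' ∧ B = B' := by
  subst h1
  induction A generalizing A' with
  | nil =>
    cases A' with
    | nil => exact ⟨rfl, by simpa using h2⟩
    | cons a A'' =>
      rw [List.cons_append] at h2
      simp only [List.nil_append] at h2
      obtain ⟨rfl, hB⟩ := List.cons.inj h2
      exact absurd (by rw [hB]; simp : v ∈ B) (List.nodup_cons.mp hnd).1
  | cons a A₂ ih =>
    cases A' with
    | nil =>
      rw [List.cons_append] at h2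
      simp only [List.nil_append] at h2
      obtain ⟨rfl, hB⟩ := List.cons.inj h2
      rw [List.cons_append] at hnd
      exact absurd (by simp : a ∈ A₂ ++ a :: B) (List.nodup_cons.mp hnd).1
    | cons a' A₃ =>
      rw [List.cons_append, List.cons_append] at h2
      obtain ⟨rfl, hB⟩ := List.cons.inj h2
      rw [List.cons_append] at hnd
      obtain ⟨h₁, h₂⟩ := ih (List.nodup_cons.mp hnd).2 hB
      exact ⟨by rw [h₁], h₂⟩

theorem pair_mem_zip_iff_infix {l : List α} {x y : α} :
    (x, y) ∈ l.zip l.tail ↔ [x, y] <:+: l := by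
  induction l with
  | nil => simp
  | cons a l ih =>
    cases l with
    | nil =>
      constructor
      · intro h; simp at h
      · intro h; have := h.length_le; simp at this
    | cons b l =>
      constructor
      · intro h
        rcases List.mem_cons.mp h with h | h
        · simp at h; obtain ⟨rfl, rfl⟩ := h; exact ⟨[], l, rfl⟩
        · have : (x, y) ∈ (b :: l).zip (b :: l).tail := h
          exact (ih.mp this).trans (List.infix_cons (List.infix_refl _))
      · intro h
        obtain ⟨s, t, hst⟩ := h
        cases s with
        | nil => simp at hst; obtain ⟨rfl, rfl, _⟩ := hst; simp
        | cons c s' =>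
          rw [List.cons_append, List.cons_append] at hst
          obtain ⟨rfl, hst⟩ := List.cons.inj hst
          right
          exact ih.mpr ⟨s', t, by simpa using hst⟩
end ListHelpers

section ChainCompat
set_option linter.deprecated false

theorem List.Chain'.imp {α : Type*} {R S : α → α → Prop} (H : ∀ a b, R a b → S a b) {l : List α}
    (h : List.Chain' R l) : List.Chain' S l := List.IsChain.imp (fun a b => H a b) h

theorem List.chain'_iff_pairwise {α : Type*} {R : α → α → Prop} [IsTrans α R] {l : List α} :
    List.Chain' R l ↔ List.Pairwise R l := by
  haveI : Trans R R R := ⟨fun h1 h2 => _root_.trans h1 h2⟩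
  exact List.isChain_iff_pairwise

theorem List.chain'_pair {α : Type*} {R : α → α → Prop} {x y : α} :
    List.Chain' R [x, y] ↔ R x y := List.isChain_pair

theorem List.chain'_cons {α : Type*} {R : α → α → Prop} {x y : α} {l : List α} :
    List.Chain' R (x :: y :: l) ↔ R x y ∧ List.Chain' R (y :: l) := List.isChain_cons_cons

theorem List.chain'_cons' {α : Type*} {R : α → α → Prop} {x : α} {l : List α} :
    List.Chain' R (x :: l) ↔ (∀ y ∈ l.head?, R x y) ∧ List.Chain' R l := List.isChain_cons

theorem List.chain'_append {α : Type*} {R : α → α → Prop} {l₁ l₂ : List α} :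
    List.Chain' R (l₁ ++ l₂) ↔ List.Chain' R l₁ ∧ List.Chain' R l₂ ∧
      ∀ x ∈ l₁.getLast?, ∀ y ∈ l₂.head?, R x y := List.isChain_append

end ChainCompat


section ListHelpers2
variable {α : Type*} [DecidableEq α]

theorem chain'_nodup {E : α → α → Prop} (hE : ∀ v, ¬ Relation.TransGen E v v)
    {l : List α} (h : l.Chain' E) : l.Nodup := by
  have h2 : l.Chain' (Relation.TransGen E) := List.Chain'.imp (fun a b => Relation.TransGen.single) h
  have : IsTrans α (Relation.TransGen E) := ⟨fun a b c => Relation.TransGen.trans⟩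
  have hp := List.chain'_iff_pairwise.mp h2
  refine List.Pairwise.imp ?_ hp
  intro a b hab he
  rw [← he] at hab
  exact hE a hab

def preAt (v : α) (l : List α) : List α := l.takeWhile (fun x => decide (x ≠ v)) ++ [v]
def postAt (v : α) (l : List α) : List α := (l.dropWhile (fun x => decide (x ≠ v))).tail

theorem dropWhile_eq_cons_postAt {v : α} {l : List α} (h : v ∈ l) :
    l.dropWhile (fun x => decide (x ≠ v)) = v :: postAt v l := by
  induction l with
  | nil => simp at h
  | cons a l ih =>
    by_cases hav : a = v
    · subst hav; simp [postAt, List.dropWhile_cons]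
    · have hmem : v ∈ l := by rcases List.mem_cons.mp h with h' | h'; exact absurd h'.symm hav; exact h'
      simp only [List.dropWhile_cons, hav]
      simpa [postAt, hav] using ih hmem

theorem preAt_append_postAt {v : α} {l : List α} (h : v ∈ l) :
    preAt v l ++ postAt v l = l := by
  have := List.takeWhile_append_dropWhile (p := fun x => decide (x ≠ v)) (l := l)
  rw [dropWhile_eq_cons_postAt h] at this
  rw [preAt]
  rw [List.append_assoc]
  simpa using this

theorem getLast?_preAt (v : α) (l : List α) : (preAt v l).getLast? = some v :=
  List.getLast?_concat

theorem preAt_ne_nil (v : α) (l : List α) : preAt v l ≠ [] := by simp [preAt]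

theorem eq_pre_post {l A B : List α} {v : α} (hnd : l.Nodup) (h : l = A ++ v :: B) :
    preAt v l = A ++ [v] ∧ postAt v l = B := by
  have hv : v ∈ l := by rw [h]; simp
  have h2 : l = (l.takeWhile (fun x => decide (x ≠ v))) ++ v :: postAt v l := by
    conv_lhs => rw [← List.takeWhile_append_dropWhile (p := fun x => decide (x ≠ v)) (l := l)]
    rw [dropWhile_eq_cons_postAt hv]
  obtain ⟨h3, h4⟩ := split_unique hnd h2 h
  constructor
  · rw [preAt, h3]
  · exact h4

theorem prefix_eq_of_getLast {l p A B : List α} {v : α} (hnd : l.Nodup)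
    (hp : p <+: l) (hv : p.getLast? = some v) (hocc : l = A ++ v :: B) : p = A ++ [v] := by
  obtain ⟨p', rfl⟩ := List.getLast?_eq_some_iff.mp hv
  obtain ⟨t, ht⟩ := hp
  have h2 : l = p' ++ v :: t := by rw [← ht]; simp
  obtain ⟨h3, _⟩ := split_unique hnd h2 hocc
  rw [h3]

theorem sum_map_finset_sum {β γ : Type*} [Fintype γ] (L : List β) (g : γ → β → ℚ) :
    (L.map (fun e => ∑ z, g z e)).sum = ∑ z, (L.map (g z)).sum := by
  induction L with
  | nil => simp
  | cons a L ih => simp [ih, Finset.sum_add_distrib]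

theorem pair_infix_append_iff {A B : List α} {x y : α} (hnd : (A ++ B).Nodup) :
    ([x, y] <:+: A ++ B) ↔
      ([x, y] <:+: A ∨ [x, y] <:+: B ∨ (A.getLast? = some x ∧ B.head? = some y)) := by
  constructor
  · intro h
    rcases gstr h with h | h | ⟨p₁, p₂, hp, h1, h2, hsA, hpB⟩
    · exact Or.inl h
    · exact Or.inr (Or.inl h)
    · right; right
      have hxy : p₁ = [x] ∧ p₂ = [y] := by
        cases p₁ with
        | nil => exact absurd rfl h1
        | cons a p₁' =>
          cases p₁' with
          | nil =>
            rw [List.singleton_append] at hp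
            obtain ⟨rfl, rfl⟩ := List.cons.inj hp
            exact ⟨rfl, rfl⟩
          | cons b p₁'' =>
            exfalso
            rw [List.cons_append, List.cons_append] at hp
            have h9 := List.cons.inj hp
            have h10 := List.cons.inj h9.2
            exact h2 (List.append_eq_nil_iff.mp h10.2.symm).2
      obtain ⟨rfl, rfl⟩ := hxy
      obtain ⟨s, hs⟩ := hsA
      obtain ⟨t, ht⟩ := hpB
      constructor
      · rw [← hs]; exact List.getLast?_concat
      · rw [← ht]; rfl
  · intro h
    rcases h with h | h | ⟨h1, h2⟩
    · exact h.trans ⟨[], B, by simp⟩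
    · exact h.trans ⟨A, [], by simp⟩
    · obtain ⟨A₀, rfl⟩ := List.getLast?_eq_some_iff.mp h1
      obtain ⟨B₁, rfl⟩ := List.head?_eq_some_iff.mp h2
      exact ⟨A₀, B₁, by simp⟩

theorem pair_indicator_append {A B : List α} {x y : α} (hnd : (A ++ B).Nodup) (m : ℚ) :
    (if [x, y] <:+: A ++ B then m else 0)
      = (if [x, y] <:+: A then m else 0) + (if [x, y] <:+: B then m else 0)
        + (if (A.getLast? = some x ∧ B.head? = some y) then m else 0) := by
  have hdisj := List.disjoint_of_nodup_append hnd
  have e1 : [x,y] <:+: A → x ∈ A := fun h => h.subset (by simp)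
  have e2 : [x,y] <:+: A → y ∈ A := fun h => h.subset (by simp)
  have e3 : [x,y] <:+: B → x ∈ B := fun h => h.subset (by simp)
  have e4 : [x,y] <:+: B → y ∈ B := fun h => h.subset (by simp)
  have e5 : A.getLast? = some x → x ∈ A := by
    intro h; obtain ⟨A₀, rfl⟩ := List.getLast?_eq_some_iff.mp h; simp
  have e6 : B.head? = some y → y ∈ B := by
    intro h; obtain ⟨B₁, rfl⟩ := List.head?_eq_some_iff.mp h; simp
  by_cases h1 : [x,y] <:+: A
  · have h2 : ¬ [x,y] <:+: B := fun h => hdisj (e1 h1) (e3 h)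
    have h3 : ¬ (A.getLast? = some x ∧ B.head? = some y) := by
      rintro ⟨-, hy⟩; exact hdisj (e2 h1) (e6 hy)
    simp [pair_infix_append_iff hnd, h1, h2, h3]
  · by_cases h2 : [x,y] <:+: B
    · have h3 : ¬ (A.getLast? = some x ∧ B.head? = some y) := by
        rintro ⟨hx, -⟩; exact hdisj (e5 hx) (e3 h2)
      simp [pair_infix_append_iff hnd, h1, h2, h3]
    · by_cases h3 : (A.getLast? = some x ∧ B.head? = some y)
      · simp [pair_infix_append_iff hnd, h1, h2, h3]
      · simp [pair_infix_append_iff hnd, h1, h2, h3]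

theorem infix_cons_cons_append {A B Q : List α} {u v : α}
    (hnd : (A ++ B).Nodup) (hndP : (u :: v :: Q).Nodup) (hQ : Q ≠ [])
    (hlast : A.getLast? = some v) :
    ((u :: v :: Q) <:+: A ++ B) ↔ ([u, v] <:+ A ∧ Q <+: B) := by
  have hdisj := List.disjoint_of_nodup_append hnd
  have hvA : v ∈ A := by
    obtain ⟨A₀, rfl⟩ := List.getLast?_eq_some_iff.mp hlast; simp
  constructor
  · intro h
    rcases gstr h with h | h | ⟨p₁, p₂, hp, h1, h2, hsA, hpB⟩
    · -- P inside A : contradiction with v = last A followed by head of Q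
      exfalso
      obtain ⟨q₀, Q', rfl⟩ := List.exists_cons_of_ne_nil hQ
      have hvq : [v, q₀] <:+: A := List.IsInfix.trans ⟨[u], Q', rfl⟩ h
      obtain ⟨s, t, hst⟩ := hvq
      obtain ⟨A₀, hA₀⟩ := List.getLast?_eq_some_iff.mp hlast
      have : A = s ++ v :: (q₀ :: t) := by rw [← hst]; simp
      have h0 := split_unique (hnd.sublist (List.sublist_append_left _ _)) hA₀ this
      exact List.cons_ne_nil _ _ h0.2.symm
    · exact absurd (h.subset (by simp)) (fun hvB => hdisj hvA hvB)
    · have hgl : p₁.getLast? = some v := by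
        obtain ⟨s, hs⟩ := hsA
        rw [← hs, List.getLast?_append_of_ne_nil _ h1] at hlast
        exact hlast
      have hp₁ : p₁ = [u] ++ [v] := by
        refine prefix_eq_of_getLast (A := [u]) (B := Q) hndP ⟨p₂, hp.symm⟩ hgl rfl
      rw [hp₁] at hsA hp
      have hpQ : Q = p₂ := by simpa using hp
      exact ⟨hsA, hpQ ▸ hpB⟩
  · rintro ⟨⟨A₀, hA₀⟩, ⟨B₁, hB₁⟩⟩
    exact ⟨A₀, B₁, by rw [← hA₀, ← hB₁]; simp⟩

end ListHelpers2

section Couple2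
variable {α β : Type*}


def couple : List (α × ℚ) → List (β × ℚ) → List ((α × β) × ℚ)
  | [], _ => []
  | _ :: _, [] => []
  | (a, x) :: A, (b, y) :: B =>
    if x ≤ y then ((a, b), x) :: couple A ((b, y - x) :: B)
    else ((a, b), y) :: couple ((a, x - y) :: A) B
termination_by A B => A.length + B.length
decreasing_by all_goals (simp only [List.length_cons]; omega)

theorem couple_nonneg {A : List (α × ℚ)} {B : List (β × ℚ)}
    (hA : ∀ e ∈ A, 0 ≤ e.2) (hB : ∀ e ∈ B, 0 ≤ e.2) :
    ∀ e ∈ couple A B, 0 ≤ e.2 := by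
  induction A, B using couple.induct with
  | case1 B => simp [couple]
  | case2 a A => simp [couple]
  | case3 a x A b y B hxy ih =>
    have hx : 0 ≤ x := hA (a, x) (List.mem_cons_self)
    have hA' : ∀ e ∈ A, 0 ≤ e.2 := fun e he => hA e (List.mem_cons_of_mem _ he)
    have hB' : ∀ e ∈ (b, y - x) :: B, 0 ≤ e.2 := by
      intro e he
      rcases List.mem_cons.mp he with rfl | he
      · have := hB (b, y) (List.mem_cons_self); simp only at this ⊢; linarith
      · exact hB _ (List.mem_cons_of_mem _ he)
    rw [couple, if_pos hxy]
    intro e he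
    rcases List.mem_cons.mp he with rfl | he
    · exact hx
    · exact ih hA' hB' e he
  | case4 a x A b y B hxy ih =>
    have hy : 0 ≤ y := hB (b, y) (List.mem_cons_self)
    have hB' : ∀ e ∈ B, 0 ≤ e.2 := fun e he => hB e (List.mem_cons_of_mem _ he)
    have hA' : ∀ e ∈ (a, x - y) :: A, 0 ≤ e.2 := by
      intro e he
      rcases List.mem_cons.mp he with rfl | he
      · simp only; linarith
      · exact hA _ (List.mem_cons_of_mem _ he)
    rw [couple, if_neg hxy]
    intro e he
    rcases List.mem_cons.mp he with rfl | he
    · exact hy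
    · exact ih hA' hB' e he

theorem couple_mem {A : List (α × ℚ)} {B : List (β × ℚ)} :
    ∀ e ∈ couple A B, (∃ w, (e.1.1, w) ∈ A) ∧ ∃ w, (e.1.2, w) ∈ B := by
  induction A, B using couple.induct with
  | case1 B => simp [couple]
  | case2 a A => simp [couple]
  | case3 a x A b y B hxy ih =>
    rw [couple, if_pos hxy]
    intro e he
    rcases List.mem_cons.mp he with rfl | he
    · exact ⟨⟨x, List.mem_cons_self⟩, ⟨y, List.mem_cons_self⟩⟩
    · obtain ⟨⟨w1, hw1⟩, ⟨w2, hw2⟩⟩ := ih e he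
      refine ⟨⟨w1, List.mem_cons_of_mem _ hw1⟩, ?_⟩
      rcases List.mem_cons.mp hw2 with h | h
      · exact ⟨y, by rw [show e.1.2 = b from congrArg Prod.fst h]; exact List.mem_cons_self⟩
      · exact ⟨w2, List.mem_cons_of_mem _ h⟩
  | case4 a x A b y B hxy ih =>
    rw [couple, if_neg hxy]
    intro e he
    rcases List.mem_cons.mp he with rfl | he
    · exact ⟨⟨x, List.mem_cons_self⟩, ⟨y, List.mem_cons_self⟩⟩
    · obtain ⟨⟨w1, hw1⟩, ⟨w2, hw2⟩⟩ := ih e he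
      refine ⟨?_, ⟨w2, List.mem_cons_of_mem _ hw2⟩⟩
      rcases List.mem_cons.mp hw1 with h | h
      · exact ⟨x, by rw [show e.1.1 = a from congrArg Prod.fst h]; exact List.mem_cons_self⟩
      · exact ⟨w1, List.mem_cons_of_mem _ h⟩

theorem sum_eq_zero_of_nonneg {A : List (α × ℚ)} (hA : ∀ e ∈ A, 0 ≤ e.2)
    (h : (A.map (·.2)).sum = 0) : ∀ e ∈ A, e.2 = 0 := by
  induction A with
  | nil => simp
  | cons a A ih =>
    have hA' : ∀ e ∈ A, 0 ≤ e.2 := fun e he => hA e (List.mem_cons_of_mem _ he)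
    simp only [List.map_cons, List.sum_cons] at h
    have h1 : 0 ≤ a.2 := hA a (List.mem_cons_self)
    have h2 : 0 ≤ (A.map (·.2)).sum := List.sum_nonneg (fun x hx => by
      obtain ⟨e, he, rfl⟩ := List.mem_map.mp hx; exact hA' e he)
    intro e he
    rcases List.mem_cons.mp he with rfl | he
    · linarith
    · exact ih hA' (by linarith) e he

theorem couple_marginal_left {A : List (α × ℚ)} {B : List (β × ℚ)}
    (hA : ∀ e ∈ A, 0 ≤ e.2) (hB : ∀ e ∈ B, 0 ≤ e.2)
    (ht : (A.map (·.2)).sum = (B.map (·.2)).sum) (g : α → ℚ) :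
    ((couple A B).map (fun e => e.2 * g e.1.1)).sum = (A.map (fun e => e.2 * g e.1)).sum := by
  induction A, B using couple.induct with
  | case1 B => simp [couple]
  | case2 a A =>
    rw [couple]
    have hz := sum_eq_zero_of_nonneg hA (by simpa using ht)
    simp only [List.map_nil, List.sum_nil]
    symm
    apply List.sum_eq_zero
    intro x hx
    obtain ⟨e, he, rfl⟩ := List.mem_map.mp hx
    rw [hz e he, zero_mul]
  | case3 a x A b y B hxy ih =>
    have hx : 0 ≤ x := hA (a, x) (List.mem_cons_self)
    have hA' : ∀ e ∈ A, 0 ≤ e.2 := fun e he => hA e (List.mem_cons_of_mem _ he)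
    have hB' : ∀ e ∈ (b, y - x) :: B, 0 ≤ e.2 := by
      intro e he
      rcases List.mem_cons.mp he with rfl | he
      · have := hB (b, y) (List.mem_cons_self); simp only at this ⊢; linarith
      · exact hB _ (List.mem_cons_of_mem _ he)
    have ht' : (A.map (·.2)).sum = (((b, y - x) :: B).map (·.2)).sum := by
      simp only [List.map_cons, List.sum_cons] at ht ⊢; linarith
    rw [couple, if_pos hxy]
    simp only [List.map_cons, List.sum_cons]
    rw [ih hA' hB' ht']
  | case4 a x A b y B hxy ih =>
    have hB' : ∀ e ∈ B, 0 ≤ e.2 := fun e he => hB e (List.mem_cons_of_mem _ he)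
    have hy : 0 ≤ y := hB (b, y) (List.mem_cons_self)
    have hA' : ∀ e ∈ (a, x - y) :: A, 0 ≤ e.2 := by
      intro e he
      rcases List.mem_cons.mp he with rfl | he
      · have := hA (a, x) (List.mem_cons_self); simp only at this ⊢; linarith
      · exact hA _ (List.mem_cons_of_mem _ he)
    have ht' : (((a, x - y) :: A).map (·.2)).sum = (B.map (·.2)).sum := by
      simp only [List.map_cons, List.sum_cons] at ht ⊢; linarith
    rw [couple, if_neg hxy]
    simp only [List.map_cons, List.sum_cons]
    rw [ih hA' hB' ht']
    simp only [List.map_cons, List.sum_cons]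
    ring

theorem couple_marginal_right {A : List (α × ℚ)} {B : List (β × ℚ)}
    (hA : ∀ e ∈ A, 0 ≤ e.2) (hB : ∀ e ∈ B, 0 ≤ e.2)
    (ht : (A.map (·.2)).sum = (B.map (·.2)).sum) (g : β → ℚ) :
    ((couple A B).map (fun e => e.2 * g e.1.2)).sum = (B.map (fun e => e.2 * g e.1)).sum := by
  induction A, B using couple.induct with
  | case1 B =>
    rw [couple]
    have hz := sum_eq_zero_of_nonneg hB (by simpa using ht.symm)
    simp only [List.map_nil, List.sum_nil]
    symm
    apply List.sum_eq_zero
    intro x hx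
    obtain ⟨e, he, rfl⟩ := List.mem_map.mp hx
    rw [hz e he, zero_mul]
  | case2 a A => simp [couple]
  | case3 a x A b y B hxy ih =>
    have hx : 0 ≤ x := hA (a, x) (List.mem_cons_self)
    have hA' : ∀ e ∈ A, 0 ≤ e.2 := fun e he => hA e (List.mem_cons_of_mem _ he)
    have hB' : ∀ e ∈ (b, y - x) :: B, 0 ≤ e.2 := by
      intro e he
      rcases List.mem_cons.mp he with rfl | he
      · have := hB (b, y) (List.mem_cons_self); simp only at this ⊢; linarith
      · exact hB _ (List.mem_cons_of_mem _ he)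
    have ht' : (A.map (·.2)).sum = (((b, y - x) :: B).map (·.2)).sum := by
      simp only [List.map_cons, List.sum_cons] at ht ⊢; linarith
    rw [couple, if_pos hxy]
    simp only [List.map_cons, List.sum_cons]
    rw [ih hA' hB' ht']
    simp only [List.map_cons, List.sum_cons]
    ring
  | case4 a x A b y B hxy ih =>
    have hB' : ∀ e ∈ B, 0 ≤ e.2 := fun e he => hB e (List.mem_cons_of_mem _ he)
    have hy : 0 ≤ y := hB (b, y) (List.mem_cons_self)
    have hA' : ∀ e ∈ (a, x - y) :: A, 0 ≤ e.2 := by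
      intro e he
      rcases List.mem_cons.mp he with rfl | he
      · have := hA (a, x) (List.mem_cons_self); simp only at this ⊢; linarith
      · exact hA _ (List.mem_cons_of_mem _ he)
    have ht' : (((a, x - y) :: A).map (·.2)).sum = (B.map (·.2)).sum := by
      simp only [List.map_cons, List.sum_cons] at ht ⊢; linarith
    rw [couple, if_neg hxy]
    simp only [List.map_cons, List.sum_cons]
    rw [ih hA' hB' ht']

theorem couple_marginal_left_ind {A : List (α × ℚ)} {B : List (β × ℚ)}
    (hA : ∀ e ∈ A, 0 ≤ e.2) (hB : ∀ e ∈ B, 0 ≤ e.2)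
    (ht : (A.map (·.2)).sum = (B.map (·.2)).sum) (PA : α → Prop) [DecidablePred PA] :
    ((couple A B).map (fun e => if PA e.1.1 then e.2 else 0)).sum
      = (A.map (fun e => if PA e.1 then e.2 else 0)).sum := by
  have h := couple_marginal_left hA hB ht (fun a => if PA a then (1:ℚ) else 0)
  simpa only [mul_ite, mul_one, mul_zero] using h

theorem couple_marginal_right_ind {A : List (α × ℚ)} {B : List (β × ℚ)}
    (hA : ∀ e ∈ A, 0 ≤ e.2) (hB : ∀ e ∈ B, 0 ≤ e.2)
    (ht : (A.map (·.2)).sum = (B.map (·.2)).sum) (PB : β → Prop) [DecidablePred PB] :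
    ((couple A B).map (fun e => if PB e.1.2 then e.2 else 0)).sum
      = (B.map (fun e => if PB e.1 then e.2 else 0)).sum := by
  have h := couple_marginal_right hA hB ht (fun b => if PB b then (1:ℚ) else 0)
  simpa only [mul_ite, mul_one, mul_zero] using h

theorem couple_badbad_le_left {A : List (α × ℚ)} {B : List (β × ℚ)}
    (hA : ∀ e ∈ A, 0 ≤ e.2) (hB : ∀ e ∈ B, 0 ≤ e.2)
    (ht : (A.map (·.2)).sum = (B.map (·.2)).sum)
    (PA : α → Prop) (PB : β → Prop) [DecidablePred PA] [DecidablePred PB] :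
    ((couple A B).map (fun e => if PA e.1.1 ∧ PB e.1.2 then e.2 else 0)).sum
      ≤ (A.map (fun e => if PA e.1 then e.2 else 0)).sum := by
  rw [← couple_marginal_left_ind hA hB ht PA]
  apply List.sum_le_sum
  intro e he
  have h0 := couple_nonneg hA hB e he
  by_cases h1 : PA e.1.1
  · by_cases h2 : PB e.1.2
    · simp [h1, h2]
    · simp [h1, h2, h0]
  · simp [h1]

theorem couple_badbad {A : List (α × ℚ)} {B : List (β × ℚ)}
    (PA : α → Prop) (PB : β → Prop) [DecidablePred PA] [DecidablePred PB]
    (hA : ∀ e ∈ A, 0 ≤ e.2) (hB : ∀ e ∈ B, 0 ≤ e.2)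
    (ht : (A.map (·.2)).sum = (B.map (·.2)).sum)
    (hsA : ∃ A₁ A₂, A = A₁ ++ A₂ ∧ (∀ e ∈ A₁, PA e.1) ∧ (∀ e ∈ A₂, ¬ PA e.1))
    (hsB : ∃ B₁ B₂, B = B₁ ++ B₂ ∧ (∀ e ∈ B₁, ¬ PB e.1) ∧ (∀ e ∈ B₂, PB e.1)) :
    ((couple A B).map (fun e => if PA e.1.1 ∧ PB e.1.2 then e.2 else 0)).sum
      ≤ max ((A.map fun e => if PA e.1 then e.2 else 0).sum
           + (B.map fun e => if PB e.1 then e.2 else 0).sum - (B.map (·.2)).sum) 0 := by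
  induction A, B using couple.induct with
  | case1 B =>
    simp only [couple, List.map_nil, List.sum_nil]
    exact le_max_right _ _
  | case2 a A =>
    simp only [couple, List.map_nil, List.sum_nil]
    exact le_max_right _ _
  | case3 a x A b y B hxy ih =>
    have hx : 0 ≤ x := hA (a, x) (List.mem_cons_self)
    have hA' : ∀ e ∈ A, 0 ≤ e.2 := fun e he => hA e (List.mem_cons_of_mem _ he)
    have hB' : ∀ e ∈ (b, y - x) :: B, 0 ≤ e.2 := by
      intro e he
      rcases List.mem_cons.mp he with rfl | he
      · have := hB (b, y) (List.mem_cons_self); simp only at this ⊢; linarith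
      · exact hB _ (List.mem_cons_of_mem _ he)
    have ht' : (A.map (·.2)).sum = (((b, y - x) :: B).map (·.2)).sum := by
      simp only [List.map_cons, List.sum_cons] at ht ⊢; linarith
    by_cases hpa : PA a
    · by_cases hpb : PB b
      · -- all of B is bad
        obtain ⟨B₁, B₂, hBeq, hB₁, hB₂⟩ := hsB
        have hallB : ∀ e ∈ (b, y) :: B, PB e.1 := by
          cases B₁ with
          | nil => intro e he; exact hB₂ e (by rw [List.nil_append] at hBeq; rw [← hBeq]; exact he)
          | cons e₀ B₁' =>
            exfalso
            rw [List.cons_append] at hBeq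
            have h9 := List.cons.inj hBeq
            exact hB₁ e₀ (List.mem_cons_self) (by rw [← h9.1]; exact hpb)
        have hbeta : (((b, y) :: B).map (fun e => if PB e.1 then e.2 else 0)).sum
            = (((b, y) :: B).map (·.2)).sum := by
          apply congrArg
          apply List.map_congr_left
          intro e he
          rw [if_pos (hallB e he)]
        calc ((couple ((a,x)::A) ((b,y)::B)).map (fun e => if PA e.1.1 ∧ PB e.1.2 then e.2 else 0)).sum
            ≤ (((a,x)::A).map (fun e => if PA e.1 then e.2 else 0)).sum :=
              couple_badbad_le_left hA hB ht PA PB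
          _ ≤ max ((((a,x)::A).map (fun e => if PA e.1 then e.2 else 0)).sum
               + (((b,y)::B).map (fun e => if PB e.1 then e.2 else 0)).sum - (((b,y)::B).map (·.2)).sum) 0 := by
              rw [hbeta]
              have hnn : 0 ≤ (((a,x)::A).map (fun e => if PA e.1 then e.2 else 0)).sum := by
                apply List.sum_nonneg
                intro z hz
                obtain ⟨e, he, rfl⟩ := List.mem_map.mp hz
                by_cases h1 : PA e.1
                · simp [h1]; exact hA e he
                · simp [h1]
              refine le_trans ?_ (le_max_left _ _)
              linarith
      · -- head of A bad, head of B good: recurse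
        obtain ⟨A₁, A₂, hAeq, hA₁, hA₂⟩ := hsA
        have hsA' : ∃ A₁ A₂, A = A₁ ++ A₂ ∧ (∀ e ∈ A₁, PA e.1) ∧ (∀ e ∈ A₂, ¬ PA e.1) := by
          cases A₁ with
          | nil =>
            exfalso
            exact hA₂ (a, x) (by rw [List.nil_append] at hAeq; rw [← hAeq]; exact List.mem_cons_self) hpa
          | cons e₀ A₁' =>
            rw [List.cons_append] at hAeq
            have h9 := List.cons.inj hAeq
            exact ⟨A₁', A₂, h9.2, fun e he => hA₁ e (List.mem_cons_of_mem _ he), hA₂⟩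
        obtain ⟨B₁, B₂, hBeq, hB₁, hB₂⟩ := hsB
        have hsB' : ∃ C₁ C₂, (b, y - x) :: B = C₁ ++ C₂ ∧ (∀ e ∈ C₁, ¬ PB e.1) ∧ (∀ e ∈ C₂, PB e.1) := by
          cases B₁ with
          | nil =>
            exfalso
            exact hpb (hB₂ (b, y) (by rw [List.nil_append] at hBeq; rw [← hBeq]; exact List.mem_cons_self))
          | cons e₀ B₁' =>
            rw [List.cons_append] at hBeq
            have h9 := List.cons.inj hBeq
            refine ⟨(b, y - x) :: B₁', B₂, by rw [List.cons_append, h9.2], ?_, hB₂⟩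
            intro e he
            rcases List.mem_cons.mp he with rfl | he
            · exact hpb
            · exact hB₁ e (List.mem_cons_of_mem _ he)
        have hrec := ih hA' hB' ht' hsA' hsB'
        rw [couple, if_pos hxy]
        simp only [List.map_cons, List.sum_cons]
        rw [if_neg (fun h => hpb h.2), if_pos hpa, if_neg hpb]
        have harith : (A.map (fun e => if PA e.1 then e.2 else 0)).sum
              + (((b, y - x) :: B).map (fun e => if PB e.1 then e.2 else 0)).sum
              - (((b, y - x) :: B).map (·.2)).sum
            = x + (A.map (fun e => if PA e.1 then e.2 else 0)).sum
              + (0 + (B.map (fun e => if PB e.1 then e.2 else 0)).sum)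
              - (y + (B.map (·.2)).sum) := by
          simp only [List.map_cons, List.sum_cons, if_neg hpb]
          ring
        rw [harith] at hrec
        linarith [hrec]
    · -- head of A good: A is all good
      obtain ⟨A₁, A₂, hAeq, hA₁, hA₂⟩ := hsA
      have hallA : ∀ e ∈ (a, x) :: A, ¬ PA e.1 := by
        cases A₁ with
        | nil => intro e he; exact hA₂ e (by rw [List.nil_append] at hAeq; rw [← hAeq]; exact he)
        | cons e₀ A₁' =>
          exfalso
          rw [List.cons_append] at hAeq
          have h9 := List.cons.inj hAeq
          exact hpa (by rw [← h9.1] at hA₁; exact hA₁ (a,x) (List.mem_cons_self))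
      have halpha : (((a,x)::A).map (fun e => if PA e.1 then e.2 else 0)).sum = 0 := by
        apply List.sum_eq_zero
        intro z hz
        obtain ⟨e, he, rfl⟩ := List.mem_map.mp hz
        rw [if_neg (hallA e he)]
      refine le_trans (le_trans (couple_badbad_le_left hA hB ht PA PB) (le_of_eq halpha)) (le_max_right _ _)
  | case4 a x A b y B hxy ih =>
    have hy : 0 ≤ y := hB (b, y) (List.mem_cons_self)
    have hB' : ∀ e ∈ B, 0 ≤ e.2 := fun e he => hB e (List.mem_cons_of_mem _ he)
    have hA' : ∀ e ∈ (a, x - y) :: A, 0 ≤ e.2 := by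
      intro e he
      rcases List.mem_cons.mp he with rfl | he
      · have := hA (a, x) (List.mem_cons_self); simp only at this ⊢; linarith
      · exact hA _ (List.mem_cons_of_mem _ he)
    have ht' : (((a, x - y) :: A).map (·.2)).sum = (B.map (·.2)).sum := by
      simp only [List.map_cons, List.sum_cons] at ht ⊢; linarith
    by_cases hpa : PA a
    · by_cases hpb : PB b
      · obtain ⟨B₁, B₂, hBeq, hB₁, hB₂⟩ := hsB
        have hallB : ∀ e ∈ (b, y) :: B, PB e.1 := by
          cases B₁ with
          | nil => intro e he; exact hB₂ e (by rw [List.nil_append] at hBeq; rw [← hBeq]; exact he)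
          | cons e₀ B₁' =>
            exfalso
            rw [List.cons_append] at hBeq
            have h9 := List.cons.inj hBeq
            exact hB₁ e₀ (List.mem_cons_self) (by rw [← h9.1]; exact hpb)
        have hbeta : (((b, y) :: B).map (fun e => if PB e.1 then e.2 else 0)).sum
            = (((b, y) :: B).map (·.2)).sum := by
          apply congrArg
          apply List.map_congr_left
          intro e he
          rw [if_pos (hallB e he)]
        calc ((couple ((a,x)::A) ((b,y)::B)).map (fun e => if PA e.1.1 ∧ PB e.1.2 then e.2 else 0)).sum
            ≤ (((a,x)::A).map (fun e => if PA e.1 then e.2 else 0)).sum :=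
              couple_badbad_le_left hA hB ht PA PB
          _ ≤ max ((((a,x)::A).map (fun e => if PA e.1 then e.2 else 0)).sum
               + (((b,y)::B).map (fun e => if PB e.1 then e.2 else 0)).sum - (((b,y)::B).map (·.2)).sum) 0 := by
              rw [hbeta]
              have hnn : 0 ≤ (((a,x)::A).map (fun e => if PA e.1 then e.2 else 0)).sum := by
                apply List.sum_nonneg
                intro z hz
                obtain ⟨e, he, rfl⟩ := List.mem_map.mp hz
                by_cases h1 : PA e.1
                · simp [h1]; exact hA e he
                · simp [h1]
              refine le_trans ?_ (le_max_left _ _)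
              linarith
      · obtain ⟨A₁, A₂, hAeq, hA₁, hA₂⟩ := hsA
        have hsA' : ∃ C₁ C₂, (a, x - y) :: A = C₁ ++ C₂ ∧ (∀ e ∈ C₁, PA e.1) ∧ (∀ e ∈ C₂, ¬ PA e.1) := by
          cases A₁ with
          | nil =>
            exfalso
            exact hA₂ (a, x) (by rw [List.nil_append] at hAeq; rw [← hAeq]; exact List.mem_cons_self) hpa
          | cons e₀ A₁' =>
            rw [List.cons_append] at hAeq
            have h9 := List.cons.inj hAeq
            refine ⟨(a, x - y) :: A₁', A₂, by rw [List.cons_append, h9.2], ?_, hA₂⟩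
            intro e he
            rcases List.mem_cons.mp he with rfl | he
            · exact hpa
            · exact hA₁ e (List.mem_cons_of_mem _ he)
        obtain ⟨B₁, B₂, hBeq, hB₁, hB₂⟩ := hsB
        have hsB' : ∃ C₁ C₂, B = C₁ ++ C₂ ∧ (∀ e ∈ C₁, ¬ PB e.1) ∧ (∀ e ∈ C₂, PB e.1) := by
          cases B₁ with
          | nil =>
            exfalso
            exact hpb (hB₂ (b, y) (by rw [List.nil_append] at hBeq; rw [← hBeq]; exact List.mem_cons_self))
          | cons e₀ B₁' =>
            rw [List.cons_append] at hBeq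
            have h9 := List.cons.inj hBeq
            exact ⟨B₁', B₂, h9.2, fun e he => hB₁ e (List.mem_cons_of_mem _ he), hB₂⟩
        have hrec := ih hA' hB' ht' hsA' hsB'
        rw [couple, if_neg hxy]
        simp only [List.map_cons, List.sum_cons]
        rw [if_neg (fun h => hpb h.2), if_pos hpa, if_neg hpb]
        have harith : (((a, x - y) :: A).map (fun e => if PA e.1 then e.2 else 0)).sum
              + (B.map (fun e => if PB e.1 then e.2 else 0)).sum
              - (B.map (·.2)).sum
            = (x + (A.map (fun e => if PA e.1 then e.2 else 0)).sum
              + (0 + (B.map (fun e => if PB e.1 then e.2 else 0)).sum)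
              - (y + (B.map (·.2)).sum)) := by
          simp only [List.map_cons, List.sum_cons, if_pos hpa, if_neg hpb]
          ring
        rw [harith] at hrec
        linarith [hrec]
    · obtain ⟨A₁, A₂, hAeq, hA₁, hA₂⟩ := hsA
      have hallA : ∀ e ∈ (a, x) :: A, ¬ PA e.1 := by
        cases A₁ with
        | nil => intro e he; exact hA₂ e (by rw [List.nil_append] at hAeq; rw [← hAeq]; exact he)
        | cons e₀ A₁' =>
          exfalso
          rw [List.cons_append] at hAeq
          have h9 := List.cons.inj hAeq
          exact hpa (by rw [← h9.1] at hA₁; exact hA₁ (a,x) (List.mem_cons_self))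
      have halpha : (((a,x)::A).map (fun e => if PA e.1 then e.2 else 0)).sum = 0 := by
        apply List.sum_eq_zero
        intro z hz
        obtain ⟨e, he, rfl⟩ := List.mem_map.mp hz
        rw [if_neg (hallA e he)]
      refine le_trans (le_trans (couple_badbad_le_left hA hB ht PA PB) (le_of_eq halpha)) (le_max_right _ _)
end Couple2





namespace FlowGraph
variable {V : Type} [Fintype V] [DecidableEq V] (G : FlowGraph V)

theorem edge_iff_pos {u v : V} : G.E u v ↔ 0 < G.f u v := by
  constructor
  · exact G.f_pos u v
  · intro h
    by_contra he
    rw [G.f_eq_zero u v he] at h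
    exact lt_irrefl 0 h

theorem path_nodup {l : List V} (h : l.Chain' G.E) : l.Nodup :=
  chain'_nodup G.acyclic h

theorem infix_edge {l : List V} {x y : V} (hc : l.Chain' G.E) (h : [x, y] <:+: l) :
    G.E x y := by
  have h2 := hc.infix h
  exact List.chain'_pair.mp h2

theorem cw_append (p : List V) (D₁ D₂ : List (List V × ℚ)) :
    G.coverWeight p (D₁ ++ D₂) = G.coverWeight p D₁ + G.coverWeight p D₂ := by
  simp [coverWeight]

theorem cw_nonneg (p : List V) {D : List (List V × ℚ)} (h : ∀ e ∈ D, 0 ≤ e.2) :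
    0 ≤ G.coverWeight p D := by
  apply List.sum_nonneg
  intro x hx
  obtain ⟨e, he, rfl⟩ := List.mem_map.mp hx
  by_cases h1 : p <:+: e.1
  · simp [h1]; exact h e he
  · simp [h1]

theorem cw_mono {p q : List V} (hpq : p <:+: q) {D : List (List V × ℚ)}
    (h : ∀ e ∈ D, 0 ≤ e.2) : G.coverWeight q D ≤ G.coverWeight p D := by
  apply List.sum_le_sum
  intro e he
  by_cases h1 : q <:+: e.1
  · rw [if_pos h1, if_pos (hpq.trans h1)]
  · rw [if_neg h1]
    by_cases h2 : p <:+: e.1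
    · rw [if_pos h2]; exact h e he
    · rw [if_neg h2]

theorem cw_perm {D D' : List (List V × ℚ)} (h : D.Perm D') (p : List V) :
    G.coverWeight p D = G.coverWeight p D' :=
  (h.map _).sum_eq

theorem cw_eq_zero {p : List V} {D : List (List V × ℚ)} (h : ∀ e ∈ D, ¬ p <:+: e.1) :
    G.coverWeight p D = 0 := by
  apply List.sum_eq_zero
  intro x hx
  obtain ⟨e, he, rfl⟩ := List.mem_map.mp hx
  rw [if_neg (h e he)]

theorem cw_filter_partition (p : List V) (D : List (List V × ℚ)) (Q : List V × ℚ → Bool) :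
    G.coverWeight p D = G.coverWeight p (D.filter Q) + G.coverWeight p (D.filter (fun e => ! Q e)) := by
  rw [← G.cw_append, G.cw_perm (List.filter_append_perm Q D).symm]

-- decomposition entry facts
theorem decomp_entry_facts {D : List (List V × ℚ)} (hD : G.IsFlowDecomposition D)
    {e : List V × ℚ} (he : e ∈ D) :
    e.1.Chain' G.E ∧ e.1.Nodup ∧ 2 ≤ e.1.length ∧ 0 < e.2 ∧
    (∀ s ∈ e.1.head?, G.IsSource s) ∧ (∀ t ∈ e.1.getLast?, G.IsSink t) := by
  obtain ⟨⟨⟨hlen, hch⟩, hsrc, hsnk⟩, hw⟩ := hD.1 e he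
  exact ⟨hch, G.path_nodup hch, hlen, hw, hsrc, hsnk⟩

theorem decomp_wt_nonneg {D : List (List V × ℚ)} (hD : G.IsFlowDecomposition D) :
    ∀ e ∈ D, 0 ≤ e.2 := fun e he => le_of_lt (hD.1 e he).2

theorem cw_edge_eq_f {D : List (List V × ℚ)} (hD : G.IsFlowDecomposition D) (u v : V) :
    G.coverWeight [u, v] D = G.f u v := by
  by_cases hE : G.E u v
  · exact hD.2 u v hE
  · rw [G.f_eq_zero u v hE]
    apply G.cw_eq_zero
    intro e he h
    exact hE (G.infix_edge (G.decomp_entry_facts hD he).1 h)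

theorem cw_split {D : List (List V × ℚ)} (hD : G.IsFlowDecomposition D)
    {v : V} (Q : List V) (hv : ∃ u, G.E u v) :
    G.coverWeight (v :: Q) D = ∑ z, G.coverWeight (z :: v :: Q) D := by
  rw [show (∑ z, G.coverWeight (z :: v :: Q) D)
      = (D.map (fun e => ∑ z, if (z :: v :: Q) <:+: e.1 then e.2 else 0)).sum from
    (sum_map_finset_sum D _).symm]
  unfold coverWeight
  apply congrArg
  apply List.map_congr_left
  intro e he
  obtain ⟨hch, hnd, hlen, hw, hsrc, hsnk⟩ := G.decomp_entry_facts hD he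
  by_cases hocc : (v :: Q) <:+: e.1
  · obtain ⟨s, t, hst⟩ := id hocc
    have hsne : s ≠ [] := by
      rintro rfl
      have : e.1.head? = some v := by rw [← hst]; rfl
      obtain ⟨u, hu⟩ := hv
      exact hsrc v this u hu
    obtain ⟨s₀, z₀, rfl⟩ := (List.eq_nil_or_concat s).resolve_left hsne
    rw [if_pos hocc]
    rw [Finset.sum_eq_single_of_mem z₀ (Finset.mem_univ _)]
    · rw [if_pos ⟨s₀, t, by rw [← hst]; simp⟩]
    · intro z _ hz
      rw [if_neg]
      rintro ⟨s', t', hst'⟩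
      have h1 : e.1 = (s₀ ++ [z₀]) ++ v :: (Q ++ t) := by rw [← hst]; simp
      have h2 : e.1 = (s' ++ [z]) ++ v :: (Q ++ t') := by rw [← hst']; simp
      obtain ⟨hAA, -⟩ := split_unique hnd h1 h2
      apply hz
      have := congrArg List.getLast? hAA
      rw [List.getLast?_concat, List.getLast?_concat] at this
      exact (Option.some.inj this).symm
  · rw [if_neg hocc]
    symm
    apply Finset.sum_eq_zero
    intro z _
    rw [if_neg]
    intro h
    exact hocc (List.IsInfix.trans ⟨[z], [], by simp⟩ h)

theorem fin_eq_fout {v : V} (hin : ∃ u, G.E u v) (hout : ∃ w, G.E v w) :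
    G.fin v = G.fout v := G.conservation v hin hout

theorem cw_split_ge {D : List (List V × ℚ)} (hD : G.IsFlowDecomposition D)
    {u v : V} (Q : List V) (hE : G.E u v) :
    G.coverWeight (v :: Q) D - (G.fin v - G.f u v) ≤ G.coverWeight (u :: v :: Q) D := by
  have hs := G.cw_split hD Q ⟨u, hE⟩
  rw [← Finset.sum_erase_add _ _ (Finset.mem_univ u)] at hs
  have hb : ∑ z ∈ Finset.univ.erase u, G.coverWeight (z :: v :: Q) D
      ≤ ∑ z ∈ Finset.univ.erase u, G.f z v := by
    apply Finset.sum_le_sum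
    intro z _
    calc G.coverWeight (z :: v :: Q) D ≤ G.coverWeight [z, v] D :=
          G.cw_mono ⟨[], Q, rfl⟩ (G.decomp_wt_nonneg hD)
      _ = G.f z v := G.cw_edge_eq_f hD z v
  have hfin : ∑ z ∈ Finset.univ.erase u, G.f z v = G.fin v - G.f u v := by
    have := Finset.sum_erase_add Finset.univ (fun z => G.f z v) (Finset.mem_univ u)
    unfold fin
    linarith
  linarith

-- excess helpers
def S (G : FlowGraph V) (l : List V) : ℚ :=
  ((l.zip l.tail).map (fun ab => ∑ x ∈ Finset.univ.erase ab.2, G.f ab.1 x)).sum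

theorem excess_eq (u v : V) (rest : List V) :
    G.excess (u :: v :: rest) = G.f u v - G.S (v :: rest) := rfl

theorem S_nil_single (v : V) : G.S [v] = 0 := rfl

theorem S_cons (x y : V) (t : List V) :
    G.S (x :: y :: t) = (∑ z ∈ Finset.univ.erase y, G.f x z) + G.S (y :: t) := by
  simp [S]

theorem erase_sum (v y : V) : ∑ x ∈ Finset.univ.erase y, G.f v x = G.fout v - G.f v y := by
  have := Finset.sum_erase_add Finset.univ (fun x => G.f v x) (Finset.mem_univ y)
  unfold fout
  linarith

theorem excess_step (u v w : V) (t : List V) :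
    G.excess (u :: v :: w :: t) = G.excess (v :: w :: t) + G.f u v - G.fout v := by
  rw [excess_eq, excess_eq, S_cons, erase_sum]
  ring

theorem excess_le_cw {D : List (List V × ℚ)} (hD : G.IsFlowDecomposition D) :
    ∀ (Q : List V) (u v : V), G.IsPath (u :: v :: Q) →
      G.excess (u :: v :: Q) ≤ G.coverWeight (u :: v :: Q) D := by
  intro Q
  induction Q with
  | nil =>
    intro u v hp
    have hE : G.E u v := List.chain'_pair.mp hp.2
    rw [G.cw_edge_eq_f hD u v]
    rw [excess_eq, S_nil_single]
    simp
  | cons w t ih =>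
    intro u v hp
    have hch := hp.2
    have hE : G.E u v := by
      rw [List.chain'_cons] at hch
      exact hch.1
    have hEvw : G.E v w := by
      rw [List.chain'_cons, List.chain'_cons] at hch
      exact hch.2.1
    have hp' : G.IsPath (v :: w :: t) := ⟨by simp, hch.tail⟩
    have h1 := ih v w hp'
    have h2 := G.cw_split_ge hD (w :: t) hE
    have h3 := G.fin_eq_fout ⟨u, hE⟩ ⟨w, hEvw⟩
    rw [excess_step]
    linarith


theorem S_pair (a b : V) : G.S [a, b] = G.fout a - G.f a b := by
  have h1 : G.S [a, b] = ∑ x ∈ Finset.univ.erase b, G.f a x := by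
    simp [S]
  rw [h1, erase_sum]

theorem zip_tail_concat (l : List V) (a b : V) :
    (l ++ [a, b]).zip (l ++ [a, b]).tail = ((l ++ [a]).zip (l ++ [a]).tail) ++ [(a, b)] := by
  induction l with
  | nil => rfl
  | cons x l ih =>
    cases l with
    | nil => rfl
    | cons y l' =>
      simp only [List.cons_append, List.tail_cons, List.zip_cons_cons] at ih ⊢
      rw [ih]

theorem S_last (l : List V) (a b : V) :
    G.S (l ++ [a, b]) = G.S (l ++ [a]) + (G.fout a - G.f a b) := by
  unfold S
  rw [zip_tail_concat, List.map_append, List.sum_append, ← G.erase_sum a b]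
  simp

theorem excess_cons_eq (u : V) (M : List V) (m₀ : V) (M' : List V) (h : M = m₀ :: M') :
    G.excess (u :: M) = G.f u m₀ - G.S M := by subst h; rfl

theorem excess_last (q : List V) (a b y : V) :
    G.excess (q ++ [a, y]) = G.excess (q ++ [a, b]) - G.f a b + G.f a y := by
  cases q with
  | nil =>
    rw [show (([] : List V) ++ [a, y]) = a :: y :: [] from rfl,
        show (([] : List V) ++ [a, b]) = a :: b :: [] from rfl,
        excess_eq, excess_eq, S_nil_single, S_nil_single]
    ring
  | cons u q' =>
    obtain ⟨m₀, M₁, M₂, h₁, h₂⟩ : ∃ m₀ M₁ M₂, q' ++ [a, y] = m₀ :: M₁ ∧ q' ++ [a, b] = m₀ :: M₂ := by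
      cases q' with
      | nil => exact ⟨a, [y], [b], rfl, rfl⟩
      | cons w q'' => exact ⟨w, q'' ++ [a, y], q'' ++ [a, b], rfl, rfl⟩
    rw [show (u :: q') ++ [a, y] = u :: (q' ++ [a, y]) from rfl,
        show (u :: q') ++ [a, b] = u :: (q' ++ [a, b]) from rfl,
        G.excess_cons_eq u _ m₀ M₁ h₁, G.excess_cons_eq u _ m₀ M₂ h₂,
        G.S_last q' a y, G.S_last q' a b]
    ring

end FlowGraph


namespace FlowGraph
variable {V : Type} [Fintype V] [DecidableEq V]

theorem exists_path_to_sink (G : FlowGraph V) (b : V) :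
    ∃ l : List V, l.head? = some b ∧ l.Chain' G.E ∧ (∀ t ∈ l.getLast?, G.IsSink t) := by
  have htrans : IsTrans V (fun x y => Relation.TransGen G.E y x) :=
    ⟨fun a b c h1 h2 => h2.trans h1⟩
  have hirr : IsIrrefl V (fun x y => Relation.TransGen G.E y x) :=
    ⟨fun a h => G.acyclic a h⟩
  have hwf := Finite.wellFounded_of_trans_of_irrefl (fun x y => Relation.TransGen G.E y x)
  refine hwf.induction (C := fun b => ∃ l : List V, l.head? = some b ∧ l.Chain' G.E ∧ (∀ t ∈ l.getLast?, G.IsSink t)) b ?_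
  intro x ih
  by_cases hx : ∃ w, G.E x w
  · obtain ⟨w, hw⟩ := hx
    obtain ⟨l, hh, hc, hs⟩ := ih w (Relation.TransGen.single hw)
    have hlne : l ≠ [] := by intro h; rw [h] at hh; simp at hh
    refine ⟨x :: l, rfl, ?_, ?_⟩
    · rw [List.chain'_cons']
      refine ⟨?_, hc⟩
      intro h hh'
      rw [hh] at hh'
      rw [← Option.some.inj hh']
      exact hw
    · intro t ht
      apply hs
      cases l with
      | nil => exact absurd rfl hlne
      | cons y l' => rwa [List.getLast?_cons_cons] at ht
  · refine ⟨[x], rfl, by simp [List.Chain'], ?_⟩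
    intro t ht
    simp at ht
    subst ht
    intro w hw
    exact hx ⟨w, hw⟩

theorem exists_path_from_source (G : FlowGraph V) (a : V) :
    ∃ l : List V, l.getLast? = some a ∧ l.Chain' G.E ∧ (∀ s ∈ l.head?, G.IsSource s) := by
  have htrans : IsTrans V (fun x y => Relation.TransGen G.E x y) :=
    ⟨fun a b c h1 h2 => h1.trans h2⟩
  have hirr : IsIrrefl V (fun x y => Relation.TransGen G.E x y) :=
    ⟨fun a h => G.acyclic a h⟩
  have hwf := Finite.wellFounded_of_trans_of_irrefl (fun x y => Relation.TransGen G.E x y)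
  refine hwf.induction (C := fun a => ∃ l : List V, l.getLast? = some a ∧ l.Chain' G.E ∧ (∀ s ∈ l.head?, G.IsSource s)) a ?_
  intro x ih
  by_cases hx : ∃ u, G.E u x
  · obtain ⟨u, hu⟩ := hx
    obtain ⟨l, hh, hc, hs⟩ := ih u (Relation.TransGen.single hu)
    have hlne : l ≠ [] := by intro h; rw [h] at hh; simp at hh
    refine ⟨l ++ [x], by rw [List.getLast?_concat], ?_, ?_⟩
    · rw [List.chain'_append]
      refine ⟨hc, by simp [List.Chain'], ?_⟩
      intro y hy z hz
      simp at hz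
      subst hz
      rw [hh] at hy
      rw [← Option.some.inj hy]
      exact hu
    · intro s hsrc
      apply hs
      rwa [List.head?_append_of_ne_nil _ hlne] at hsrc
  · refine ⟨[x], rfl, by simp [List.Chain'], ?_⟩
    intro s hsx
    simp at hsx
    subst hsx
    intro u hu
    exact hx ⟨u, hu⟩

theorem exists_min_edge (G : FlowGraph V) {p : List V} (hch : p.Chain' G.E)
    {x₀ y₀ : V} (h₀ : [x₀, y₀] <:+: p) :
    ∃ m : ℚ, 0 < m ∧ (∀ x y, [x, y] <:+: p → m ≤ G.f x y) ∧
      ∃ x y, [x, y] <:+: p ∧ G.f x y = m := by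
  have hLne : (p.zip p.tail).map (fun e => G.f e.1 e.2) ≠ [] := by
    have : (x₀, y₀) ∈ p.zip p.tail := pair_mem_zip_iff_infix.mpr h₀
    intro h
    rw [List.map_eq_nil_iff] at h
    rw [h] at this
    simp at this
  obtain ⟨m, hm, hle⟩ := exists_list_min hLne
  obtain ⟨e, he, rfl⟩ := List.mem_map.mp hm
  have hee : [e.1, e.2] <:+: p := pair_mem_zip_iff_infix.mp (by rw [Prod.mk.eta]; exact he)
  refine ⟨G.f e.1 e.2, G.f_pos _ _ (G.infix_edge hch hee), ?_, e.1, e.2, hee, rfl⟩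
  intro x y hxy
  exact hle _ (List.mem_map.mpr ⟨(x, y), pair_mem_zip_iff_infix.mpr hxy, rfl⟩)

theorem sum_ite_infix_in (G : FlowGraph V) {p : List V} (hnd : p.Nodup) (v : V) (m : ℚ) :
    (∑ u, if [u, v] <:+: p then m else 0) = if (∃ u, [u, v] <:+: p) then m else 0 := by
  by_cases h : ∃ u, [u, v] <:+: p
  · obtain ⟨u₀, hu₀⟩ := h
    rw [if_pos ⟨u₀, hu₀⟩]
    rw [Finset.sum_eq_single_of_mem u₀ (Finset.mem_univ _)]
    · rw [if_pos hu₀]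
    · intro z _ hz
      rw [if_neg]
      rintro ⟨s, t, hst⟩
      obtain ⟨s', t', hst'⟩ := hu₀
      have h1 : p = (s ++ [z]) ++ v :: t := by rw [← hst]; simp
      have h2 : p = (s' ++ [u₀]) ++ v :: t' := by rw [← hst']; simp
      obtain ⟨hAA, -⟩ := split_unique hnd h1 h2
      apply hz
      have := congrArg List.getLast? hAA
      rw [List.getLast?_concat, List.getLast?_concat] at this
      exact Option.some.inj this
  · rw [if_neg h]
    apply Finset.sum_eq_zero
    intro z _
    rw [if_neg (fun hc => h ⟨z, hc⟩)]

theorem sum_ite_infix_out (G : FlowGraph V) {p : List V} (hnd : p.Nodup) (v : V) (m : ℚ) :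
    (∑ w, if [v, w] <:+: p then m else 0) = if (∃ w, [v, w] <:+: p) then m else 0 := by
  by_cases h : ∃ w, [v, w] <:+: p
  · obtain ⟨w₀, hw₀⟩ := h
    rw [if_pos ⟨w₀, hw₀⟩]
    rw [Finset.sum_eq_single_of_mem w₀ (Finset.mem_univ _)]
    · rw [if_pos hw₀]
    · intro z _ hz
      rw [if_neg]
      rintro ⟨s, t, hst⟩
      obtain ⟨s', t', hst'⟩ := hw₀
      have h1 : p = s ++ v :: (z :: t) := by rw [← hst]; simp
      have h2 : p = s' ++ v :: (w₀ :: t') := by rw [← hst']; simp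
      obtain ⟨-, hBB⟩ := split_unique hnd h1 h2
      exact hz (List.cons.inj hBB).1
  · rw [if_neg h]
    apply Finset.sum_eq_zero
    intro z _
    rw [if_neg (fun hc => h ⟨z, hc⟩)]

theorem infix_in_iff_out (G : FlowGraph V) {p : List V}
    (hsrc : ∀ s ∈ p.head?, G.IsSource s) (hsnk : ∀ t ∈ p.getLast?, G.IsSink t)
    {v : V} (hin : ∃ u, G.E u v) (hout : ∃ w, G.E v w) :
    (∃ u, [u, v] <:+: p) ↔ (∃ w, [v, w] <:+: p) := by
  constructor
  · rintro ⟨u, s, t, hst⟩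
    cases t with
    | nil =>
      exfalso
      have : p.getLast? = some v := by rw [← hst]; simp
      obtain ⟨w, hw⟩ := hout
      exact hsnk v this w hw
    | cons w t' =>
      exact ⟨w, s ++ [u], t', by rw [← hst]; simp⟩
  · rintro ⟨w, s, t, hst⟩
    cases s with
    | nil =>
      exfalso
      have : p.head? = some v := by rw [← hst]; rfl
      obtain ⟨u, hu⟩ := hin
      exact hsrc v this u hu
    | cons u₁ s' =>
      obtain ⟨s₀, u, hcat⟩ := (List.eq_nil_or_concat (u₁ :: s')).resolve_left (by simp)
      exact ⟨u, s₀, w :: t, by rw [← hst, hcat]; simp⟩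

theorem exists_decomposition (G : FlowGraph V) : ∃ D, G.IsFlowDecomposition D := by
  suffices h : ∀ (n : ℕ) (G : FlowGraph V),
      (Finset.univ.filter (fun e : V × V => 0 < G.f e.1 e.2)).card = n →
      ∃ D, G.IsFlowDecomposition D from h _ G rfl
  intro n
  induction n using Nat.strong_induction_on with
  | _ n ih =>
    intro G hcard
    by_cases hne : (Finset.univ.filter (fun e : V × V => 0 < G.f e.1 e.2)).Nonempty
    · obtain ⟨⟨a, b⟩, hab⟩ := hne
      rw [Finset.mem_filter] at hab
      have hEab : G.E a b := G.edge_iff_pos.mpr hab.2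
      obtain ⟨l₁, hl₁last, hl₁ch, hl₁src⟩ := exists_path_from_source G a
      obtain ⟨l₂, hl₂head, hl₂ch, hl₂snk⟩ := exists_path_to_sink G b
      have hl₁ne : l₁ ≠ [] := by intro h; rw [h] at hl₁last; simp at hl₁last
      have hl₂ne : l₂ ≠ [] := by intro h; rw [h] at hl₂head; simp at hl₂head
      set p := l₁ ++ l₂ with hp
      have hpch : p.Chain' G.E := by
        rw [hp, List.chain'_append]
        refine ⟨hl₁ch, hl₂ch, ?_⟩
        intro x hx y hy
        rw [hl₁last] at hx
        rw [hl₂head] at hy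
        rw [← Option.some.inj hx, ← Option.some.inj hy]
        exact hEab
      have hpnd : p.Nodup := G.path_nodup hpch
      have hpsrc : ∀ s ∈ p.head?, G.IsSource s := by
        intro s hs
        apply hl₁src
        rwa [hp, List.head?_append_of_ne_nil _ hl₁ne] at hs
      have hpsnk : ∀ t ∈ p.getLast?, G.IsSink t := by
        intro t ht
        apply hl₂snk
        rwa [hp, List.getLast?_append_of_ne_nil _ hl₂ne] at ht
      have habp : [a, b] <:+: p := by
        obtain ⟨l₁', rfl⟩ := List.getLast?_eq_some_iff.mp hl₁last
        obtain ⟨l₂', rfl⟩ := List.head?_eq_some_iff.mp hl₂head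
        exact ⟨l₁', l₂', by rw [hp]; simp⟩
      obtain ⟨m, hmpos, hmle, x₀, y₀, hxy₀, hfm⟩ := exists_min_edge G hpch habp
      have hitenn : ∀ u v : V, 0 ≤ G.f u v - (if [u, v] <:+: p then m else 0) := by
        intro u v
        by_cases h : [u, v] <:+: p
        · rw [if_pos h]; linarith [hmle u v h]
        · rw [if_neg h]
          simp only [sub_zero]
          by_cases hE : G.E u v
          · linarith [G.f_pos u v hE]
          · rw [G.f_eq_zero u v hE]
      have hEsub : ∀ u v : V, 0 < G.f u v - (if [u, v] <:+: p then m else 0) → G.E u v := by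
        intro u v h
        apply G.edge_iff_pos.mpr
        by_cases hc : [u, v] <:+: p
        · rw [if_pos hc] at h; linarith
        · rw [if_neg hc] at h; linarith
      set G' : FlowGraph V :=
        { E := fun u v => 0 < G.f u v - (if [u, v] <:+: p then m else 0)
          f := fun u v => G.f u v - (if [u, v] <:+: p then m else 0)
          f_pos := fun u v h => h
          f_eq_zero := fun u v h => le_antisymm (not_lt.mp h) (hitenn u v)
          acyclic := by
            intro v hv
            exact G.acyclic v (Relation.TransGen.mono hEsub _ _ hv)
          conservation := by
            intro v hvin hvout
            have hvinG : ∃ u, G.E u v := ⟨hvin.choose, hEsub _ _ hvin.choose_spec⟩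
            have hvoutG : ∃ w, G.E v w := ⟨hvout.choose, hEsub _ _ hvout.choose_spec⟩
            have hGcons := G.conservation v hvinG hvoutG
            rw [Finset.sum_sub_distrib, Finset.sum_sub_distrib]
            rw [G.sum_ite_infix_in hpnd v m, G.sum_ite_infix_out hpnd v m]
            rw [hGcons]
            rw [if_congr (G.infix_in_iff_out hpsrc hpsnk hvinG hvoutG) rfl rfl] } with hG'
      have hG'f : ∀ u v, G'.f u v = G.f u v - (if [u, v] <:+: p then m else 0) := fun u v => rfl
      have hlt : (Finset.univ.filter (fun e : V × V => 0 < G'.f e.1 e.2)).card < n := by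
        rw [← hcard]
        apply Finset.card_lt_card
        constructor
        · intro e he
          rw [Finset.mem_filter] at he ⊢
          exact ⟨he.1, G.edge_iff_pos.mp (hEsub e.1 e.2 he.2)⟩
        · intro hsub
          have h1 : ((x₀, y₀) : V × V) ∈ Finset.univ.filter (fun e : V × V => 0 < G.f e.1 e.2) := by
            rw [Finset.mem_filter]
            exact ⟨Finset.mem_univ _, by rw [hfm]; exact hmpos⟩
          have h2 := hsub h1
          rw [Finset.mem_filter] at h2
          have h3 := h2.2
          rw [hG'f, if_pos hxy₀, hfm] at h3
          simp at h3
      obtain ⟨D', hD'⟩ := ih _ hlt G' rfl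
      have hG'source : ∀ v : V, (∃ w, G'.E v w) → (∀ u, ¬ G'.E u v) → G.IsSource v := by
        intro v hvout hvsrc u hu
        obtain ⟨w, hw⟩ := hvout
        have hvoutG : ∃ w', G.E v w' := ⟨w, hEsub _ _ hw⟩
        have hvinG : ∃ u', G.E u' v := ⟨u, hu⟩
        have hGcons := G.conservation v hvinG hvoutG
        have hin0 : (∑ u', G'.f u' v) = 0 := by
          apply Finset.sum_eq_zero
          intro z _
          exact le_antisymm (not_lt.mp (hvsrc z)) (hitenn z v)
        have hout0 : (∑ w', G'.f v w') > 0 := by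
          have h1 : G'.f v w > 0 := hw
          have h2 : ∀ w' ∈ Finset.univ, 0 ≤ G'.f v w' := fun w' _ => hitenn v w'
          calc (0:ℚ) < G'.f v w := h1
            _ ≤ ∑ w', G'.f v w' := Finset.single_le_sum h2 (Finset.mem_univ w)
        have heq : (∑ u', G'.f u' v) = (∑ w', G'.f v w') := by
          simp only [hG'f]
          rw [Finset.sum_sub_distrib, Finset.sum_sub_distrib]
          rw [G.sum_ite_infix_in hpnd v m, G.sum_ite_infix_out hpnd v m]
          rw [hGcons, if_congr (G.infix_in_iff_out hpsrc hpsnk hvinG hvoutG) rfl rfl]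
        rw [heq] at hin0
        linarith
      have hG'sink : ∀ v : V, (∃ u, G'.E u v) → (∀ w, ¬ G'.E v w) → G.IsSink v := by
        intro v hvin hvsnk w hvw
        obtain ⟨u, hu⟩ := hvin
        have hvinG : ∃ u', G.E u' v := ⟨u, hEsub _ _ hu⟩
        have hvoutG : ∃ w', G.E v w' := ⟨w, hvw⟩
        have hGcons := G.conservation v hvinG hvoutG
        have hout0 : (∑ w', G'.f v w') = 0 := by
          apply Finset.sum_eq_zero
          intro z _
          exact le_antisymm (not_lt.mp (hvsnk z)) (hitenn v z)
        have hin0 : (∑ u', G'.f u' v) > 0 := by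
          calc (0:ℚ) < G'.f u v := hu
            _ ≤ ∑ u', G'.f u' v := Finset.single_le_sum (fun z _ => hitenn z v) (Finset.mem_univ u)
        have heq : (∑ u', G'.f u' v) = (∑ w', G'.f v w') := by
          simp only [hG'f]
          rw [Finset.sum_sub_distrib, Finset.sum_sub_distrib]
          rw [G.sum_ite_infix_in hpnd v m, G.sum_ite_infix_out hpnd v m]
          rw [hGcons, if_congr (G.infix_in_iff_out hpsrc hpsnk hvinG hvoutG) rfl rfl]
        rw [heq, hout0] at hin0
        linarith
      refine ⟨(p, m) :: D', ?_, ?_⟩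
      · intro Pw hPw
        rcases List.mem_cons.mp hPw with rfl | hPw
        · exact ⟨⟨⟨habp.length_le, hpch⟩, hpsrc, hpsnk⟩, hmpos⟩
        · obtain ⟨⟨⟨hlen, hch⟩, hsrc, hsnk⟩, hwpos⟩ := hD'.1 Pw hPw
          refine ⟨⟨⟨hlen, hch.imp (fun {x y} h => hEsub x y h)⟩, ?_, ?_⟩, hwpos⟩
          · intro s hs
            cases Pw1 : Pw.1 with
            | nil => rw [Pw1] at hs; simp at hs
            | cons s₀ rest =>
              rw [Pw1] at hs hch hlen
              have hs' : s₀ = s := Option.some.inj (Option.mem_def.mp hs)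
              subst hs'
              cases rest with
              | nil => simp at hlen
              | cons s₁ rest' =>
                have hE01 : G'.E s₀ s₁ := (List.chain'_cons.mp hch).1
                exact hG'source s₀ ⟨s₁, hE01⟩ (fun u hu => hsrc s₀ (by rw [Pw1]; rfl) u hu)
          · intro t ht
            obtain ⟨Pre, hPw1⟩ := List.getLast?_eq_some_iff.mp ht
            have hsnk' := hsnk t ht
            have hPrene : Pre ≠ [] := by
              intro h
              rw [hPw1, h] at hlen
              simp at hlen
            obtain ⟨Pre₀, z, hPre⟩ := (List.eq_nil_or_concat Pre).resolve_left hPrene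
            have hzt : G'.E z t := by
              have h2 : [z, t] <:+: Pw.1 := by
                rw [hPw1, hPre]
                exact ⟨Pre₀, [], by simp⟩
              exact G'.infix_edge hch h2
            exact hG'sink t ⟨z, hzt⟩ (fun w hw => hsnk' w hw)
      · intro u v hEuv
        have hcw : G.coverWeight [u, v] D' = G'.f u v := by
          have h1 : G'.coverWeight [u, v] D' = G'.f u v := G'.cw_edge_eq_f hD' u v
          exact h1
        unfold coverWeight at hcw ⊢
        simp only [List.map_cons, List.sum_cons]
        rw [hcw, hG'f]
        ring
    · rw [Finset.not_nonempty_iff_eq_empty] at hne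
      refine ⟨[], by simp [IsFlowDecomposition], ?_⟩
      intro u v hE
      exfalso
      have : ((u, v) : V × V) ∈ Finset.univ.filter (fun e : V × V => 0 < G.f e.1 e.2) := by
        rw [Finset.mem_filter]
        exact ⟨Finset.mem_univ _, G.f_pos u v hE⟩
      rw [hne] at this
      simp at this

end FlowGraph

section FilterPos
variable {gam : Type*}
theorem sum_map_ite_filter_pos (C : List (gam × ℚ)) (hnn : ∀ e ∈ C, 0 ≤ e.2)
    (P : gam × ℚ → Prop) [DecidablePred P] :
    (((C.filter (fun e => decide (0 < e.2))).map (fun e => if P e then e.2 else 0)).sum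
      = (C.map (fun e => if P e then e.2 else 0)).sum) := by
  induction C with
  | nil => simp
  | cons c C ih =>
    have hc := hnn c (List.mem_cons_self)
    have ih' := ih (fun e he => hnn e (List.mem_cons_of_mem _ he))
    rw [List.filter_cons]
    by_cases h : 0 < c.2
    · simp only [h, List.map_cons, List.sum_cons, ih']
      simp [ih']
    · have hc0 : c.2 = 0 := le_antisymm (not_lt.mp h) hc
      simp only [h, List.map_cons, List.sum_cons, ih']
      simp [ih', hc0]
end FilterPos

namespace FlowGraph
variable {V : Type} [Fintype V] [DecidableEq V]

theorem f_nonneg (G : FlowGraph V) (u v : V) : 0 ≤ G.f u v := by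
  by_cases h : G.E u v
  · exact le_of_lt (G.f_pos u v h)
  · rw [G.f_eq_zero u v h]

theorem exists_min_cover (G : FlowGraph V) :
    ∀ (Q : List V) (u v : V), G.IsPath (u :: v :: Q) →
      ∃ D, G.IsFlowDecomposition D ∧
        G.coverWeight (u :: v :: Q) D ≤ max (G.excess (u :: v :: Q)) 0 := by
  intro Q
  induction Q with
  | nil =>
    intro u v hp
    obtain ⟨D₀, hD₀⟩ := G.exists_decomposition
    refine ⟨D₀, hD₀, ?_⟩
    rw [G.cw_edge_eq_f hD₀ u v, excess_eq, S_nil_single, sub_zero]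
    exact le_max_left _ _
  | cons w t ih =>
    intro u v hp
    have hch := hp.2
    have hEuv : G.E u v := (List.chain'_cons.mp hch).1
    have hEvw : G.E v w := (List.chain'_cons.mp (List.chain'_cons.mp hch).2).1
    have hndP : (u :: v :: w :: t).Nodup := G.path_nodup hch
    have hp' : G.IsPath (v :: w :: t) := ⟨by simp, (List.chain'_cons.mp hch).2⟩
    obtain ⟨D', hD', hcwD'⟩ := ih v w hp'
    classical
    set Dv := D'.filter (fun e => decide (v ∈ e.1)) with hDvdef
    set Do := D'.filter (fun e => ! decide (v ∈ e.1)) with hDodef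
    have hDvD' : ∀ r ∈ Dv, r ∈ D' := by
      intro r hr; rw [hDvdef, List.mem_filter] at hr; exact hr.1
    have hvmem : ∀ r ∈ Dv, v ∈ r.1 := by
      intro r hr; rw [hDvdef, List.mem_filter] at hr; simpa using hr.2
    have hvnot : ∀ r ∈ Do, v ∉ r.1 := by
      intro r hr; rw [hDodef, List.mem_filter] at hr; simpa using hr.2
    -- facts about split paths
    have hndr : ∀ r ∈ Dv, (r.1 : List V).Nodup :=
      fun r hr => (G.decomp_entry_facts hD' (hDvD' r hr)).2.1
    have hchr : ∀ r ∈ Dv, (r.1 : List V).Chain' G.E :=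
      fun r hr => (G.decomp_entry_facts hD' (hDvD' r hr)).1
    have hsplit : ∀ r ∈ Dv, preAt v r.1 ++ postAt v r.1 = r.1 :=
      fun r hr => preAt_append_postAt (hvmem r hr)
    have hprelast : ∀ r : List V × ℚ, (preAt v r.1).getLast? = some v :=
      fun r => getLast?_preAt v r.1
    have hpostne : ∀ r ∈ Dv, postAt v r.1 ≠ [] := by
      intro r hr h0
      have h1 : r.1.getLast? = some v := by
        rw [← hsplit r hr, h0, List.append_nil, hprelast r]
      exact (G.decomp_entry_facts hD' (hDvD' r hr)).2.2.2.2.2 v h1 w hEvw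
    have hsplitch : ∀ r ∈ Dv, (preAt v r.1).Chain' G.E ∧ (postAt v r.1).Chain' G.E ∧
        ∀ y₀ ∈ (postAt v r.1).head?, G.E v y₀ := by
      intro r hr
      have h1 := hchr r hr
      rw [← hsplit r hr, List.chain'_append] at h1
      refine ⟨h1.1, h1.2.1, ?_⟩
      intro y₀ hy₀
      exact h1.2.2 v (hprelast r) y₀ hy₀
    have hpreh : ∀ r ∈ Dv, r.1.head? = (preAt v r.1).head? := by
      intro r hr
      conv_lhs => rw [← hsplit r hr]
      rw [List.head?_append_of_ne_nil _ (preAt_ne_nil v r.1)]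
    have hpostl : ∀ r ∈ Dv, r.1.getLast? = (postAt v r.1).getLast? := by
      intro r hr
      conv_lhs => rw [← hsplit r hr]
      rw [List.getLast?_append_of_ne_nil _ (hpostne r hr)]
    -- the coupling
    set pc : List V × ℚ → List V × ℚ := fun e => (preAt v e.1, e.2) with hpc
    set qc : List V × ℚ → List V × ℚ := fun e => (postAt v e.1, e.2) with hqc
    set badA : List V → Prop := fun A => [u, v] <:+ A with hbadA
    set badB : List V → Prop := fun B => (w :: t) <+: B with hbadB
    set LA := (Dv.filter (fun e => decide (badA (preAt v e.1)))
        ++ Dv.filter (fun e => ! decide (badA (preAt v e.1)))).map pc with hLA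
    set LB := (Dv.filter (fun e => ! decide (badB (postAt v e.1)))
        ++ Dv.filter (fun e => decide (badB (postAt v e.1)))).map qc with hLB
    have hpermA : LA.Perm (Dv.map pc) :=
      (List.filter_append_perm _ Dv).map pc
    have hpermB : LB.Perm (Dv.map qc) := by
      refine List.Perm.map qc ?_
      exact (List.perm_append_comm).trans (List.filter_append_perm _ Dv)
    have hmemLA : ∀ e ∈ LA, ∃ r ∈ Dv, e = pc r := by
      intro e he
      have := hpermA.mem_iff.mp he
      obtain ⟨r, hr, rfl⟩ := List.mem_map.mp this
      exact ⟨r, hr, rfl⟩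
    have hmemLB : ∀ e ∈ LB, ∃ r ∈ Dv, e = qc r := by
      intro e he
      have := hpermB.mem_iff.mp he
      obtain ⟨r, hr, rfl⟩ := List.mem_map.mp this
      exact ⟨r, hr, rfl⟩
    have hwpos : ∀ r ∈ Dv, 0 < r.2 := fun r hr => (hD'.1 r (hDvD' r hr)).2
    have hnnLA : ∀ e ∈ LA, 0 ≤ e.2 := by
      intro e he
      obtain ⟨r, hr, rfl⟩ := hmemLA e he
      exact le_of_lt (hwpos r hr)
    have hnnLB : ∀ e ∈ LB, 0 ≤ e.2 := by
      intro e he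
      obtain ⟨r, hr, rfl⟩ := hmemLB e he
      exact le_of_lt (hwpos r hr)
    have hsum_pc : ∀ (L : List (List V × ℚ)) (g : List V × ℚ → ℚ),
        ((L.map pc).map g).sum = (L.map (fun e => g (pc e))).sum := by
      intro L g
      rw [List.map_map]
      rfl
    have htotA : (LA.map (fun e => e.2)).sum = (Dv.map (fun e => e.2)).sum := by
      rw [(hpermA.map (fun e => e.2)).sum_eq, List.map_map]
      rfl
    have htotB : (LB.map (fun e => e.2)).sum = (Dv.map (fun e => e.2)).sum := by
      rw [(hpermB.map (fun e => e.2)).sum_eq, List.map_map]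
      rfl
    have htot : (LA.map (fun e => e.2)).sum = (LB.map (fun e => e.2)).sum := by
      rw [htotA, htotB]
    set C := couple LA LB with hC
    have hCnn : ∀ e ∈ C, 0 ≤ e.2 := couple_nonneg hnnLA hnnLB
    have hCmem : ∀ e ∈ C, (∃ r₁ ∈ Dv, e.1.1 = preAt v r₁.1) ∧ (∃ r₂ ∈ Dv, e.1.2 = postAt v r₂.1) := by
      intro e he
      obtain ⟨⟨w1, hw1⟩, ⟨w2, hw2⟩⟩ := couple_mem e he
      constructor
      · obtain ⟨r, hr, hre⟩ := hmemLA _ hw1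
        exact ⟨r, hr, congrArg Prod.fst hre⟩
      · obtain ⟨r, hr, hre⟩ := hmemLB _ hw2
        exact ⟨r, hr, congrArg Prod.fst hre⟩
    have hCpath : ∀ e ∈ C, (e.1.1 ++ e.1.2).Chain' G.E ∧ (e.1.1 ++ e.1.2).Nodup ∧
        e.1.1.getLast? = some v ∧ e.1.1 ≠ [] ∧ e.1.2 ≠ [] ∧
        (∀ s ∈ (e.1.1 ++ e.1.2).head?, G.IsSource s) ∧
        (∀ s ∈ (e.1.1 ++ e.1.2).getLast?, G.IsSink s) := by
      intro e he
      obtain ⟨⟨r₁, hr₁, hA⟩, ⟨r₂, hr₂, hB⟩⟩ := hCmem e he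
      have hAch : e.1.1.Chain' G.E := by rw [hA]; exact (hsplitch r₁ hr₁).1
      have hBch : e.1.2.Chain' G.E := by rw [hB]; exact (hsplitch r₂ hr₂).2.1
      have hAl : e.1.1.getLast? = some v := by rw [hA]; exact hprelast r₁
      have hAne : e.1.1 ≠ [] := by rw [hA]; exact preAt_ne_nil v r₁.1
      have hBne : e.1.2 ≠ [] := by rw [hB]; exact hpostne r₂ hr₂
      have hjunc : ∀ y₀ ∈ e.1.2.head?, G.E v y₀ := by rw [hB]; exact (hsplitch r₂ hr₂).2.2
      have hABch : (e.1.1 ++ e.1.2).Chain' G.E := by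
        rw [List.chain'_append]
        refine ⟨hAch, hBch, ?_⟩
        intro x hx y hy
        rw [hAl] at hx
        have hvx : v = x := Option.some.inj (Option.mem_def.mp hx)
        rw [← hvx]
        exact hjunc y hy
      refine ⟨hABch, G.path_nodup hABch, hAl, hAne, hBne, ?_, ?_⟩
      · intro s hs
        rw [List.head?_append_of_ne_nil _ hAne, hA, ← hpreh r₁ hr₁] at hs
        exact (G.decomp_entry_facts hD' (hDvD' r₁ hr₁)).2.2.2.2.1 s hs
      · intro s hs
        rw [List.getLast?_append_of_ne_nil _ hBne, hB, ← hpostl r₂ hr₂] at hs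
        exact (G.decomp_entry_facts hD' (hDvD' r₂ hr₂)).2.2.2.2.2 s hs
    set DN := (C.filter (fun e => decide (0 < e.2))).map (fun e => (e.1.1 ++ e.1.2, e.2)) with hDN
    have hcwDN : ∀ p : List V, G.coverWeight p DN
        = (C.map (fun e => if p <:+: e.1.1 ++ e.1.2 then e.2 else 0)).sum := by
      intro p
      rw [hDN]
      unfold coverWeight
      rw [List.map_map]
      exact sum_map_ite_filter_pos C hCnn (fun e => p <:+: e.1.1 ++ e.1.2)
    set D := Do ++ DN with hD
    have hDoD' : ∀ r ∈ Do, r ∈ D' := fun r hr => List.mem_of_mem_filter hr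
    -- D is a decomposition
    have hDdecomp : G.IsFlowDecomposition D := by
      constructor
      · intro Pw hPw
        rcases List.mem_append.mp hPw with h | h
        · exact hD'.1 Pw (hDoD' Pw h)
        · obtain ⟨e, he, rfl⟩ := List.mem_map.mp h
          have hef := List.mem_filter.mp he
          have hfacts := hCpath e hef.1
          have hpos : (0:ℚ) < e.2 := by simpa using hef.2
          have hlen2 : 2 ≤ (e.1.1 ++ e.1.2).length := by
            rw [List.length_append]
            have l1 := List.length_pos_iff.mpr hfacts.2.2.2.1
            have l2 := List.length_pos_iff.mpr hfacts.2.2.2.2.1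
            omega
          exact ⟨⟨⟨hlen2, hfacts.1⟩, hfacts.2.2.2.2.2.1, hfacts.2.2.2.2.2.2⟩, hpos⟩
      · intro x y hExy
        have hsplitD' : G.coverWeight [x,y] D' = G.coverWeight [x,y] Dv + G.coverWeight [x,y] Do :=
          G.cw_filter_partition [x,y] D' (fun e => decide (v ∈ e.1))
        have h1 := hcwDN [x,y]
        have h2 : ∀ e ∈ C, (if [x,y] <:+: e.1.1 ++ e.1.2 then e.2 else 0)
            = ((if [x,y] <:+: e.1.1 then e.2 else 0) + (if [x,y] <:+: e.1.2 then e.2 else 0))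
              + (if (e.1.1.getLast? = some x ∧ e.1.2.head? = some y) then e.2 else 0) := by
          intro e he
          rw [pair_indicator_append (hCpath e he).2.1 e.2]
        have h3 : (C.map (fun e => if [x,y] <:+: e.1.1 ++ e.1.2 then e.2 else 0)).sum
            = ((C.map (fun e => if [x,y] <:+: e.1.1 then e.2 else 0)).sum
              + (C.map (fun e => if [x,y] <:+: e.1.2 then e.2 else 0)).sum)
              + (C.map (fun e => if (e.1.1.getLast? = some x ∧ e.1.2.head? = some y) then e.2 else 0)).sum := by
          rw [List.map_congr_left h2, List.sum_map_add, List.sum_map_add]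
        have h4 : (C.map (fun e => if [x,y] <:+: e.1.1 then e.2 else 0)).sum
            = (Dv.map (fun e => if [x,y] <:+: preAt v e.1 then e.2 else 0)).sum := by
          rw [couple_marginal_left_ind hnnLA hnnLB htot (fun A => [x,y] <:+: A)]
          rw [(hpermA.map _).sum_eq, List.map_map]
          rfl
        have h5 : (C.map (fun e => if [x,y] <:+: e.1.2 then e.2 else 0)).sum
            = (Dv.map (fun e => if [x,y] <:+: postAt v e.1 then e.2 else 0)).sum := by
          rw [couple_marginal_right_ind hnnLA hnnLB htot (fun B => [x,y] <:+: B)]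
          rw [(hpermB.map _).sum_eq, List.map_map]
          rfl
        have h6 : (C.map (fun e => if (e.1.1.getLast? = some x ∧ e.1.2.head? = some y) then e.2 else 0)).sum
            = (Dv.map (fun e => if ((preAt v e.1).getLast? = some x ∧ (postAt v e.1).head? = some y) then e.2 else 0)).sum := by
          by_cases hxv : x = v
          · have e1 : ∀ e ∈ C, (if (e.1.1.getLast? = some x ∧ e.1.2.head? = some y) then e.2 else 0)
                = (if e.1.2.head? = some y then e.2 else 0) := by
              intro e he
              refine if_congr (and_iff_right ?_) rfl rfl
              rw [(hCpath e he).2.2.1, hxv]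
            have e2 : ∀ r ∈ Dv, (if ((preAt v r.1).getLast? = some x ∧ (postAt v r.1).head? = some y) then r.2 else 0)
                = (if (postAt v r.1).head? = some y then r.2 else 0) := by
              intro r _
              refine if_congr (and_iff_right ?_) rfl rfl
              rw [hprelast r, hxv]
            rw [List.map_congr_left e1, List.map_congr_left e2]
            rw [couple_marginal_right_ind hnnLA hnnLB htot (fun B => B.head? = some y)]
            rw [(hpermB.map _).sum_eq, List.map_map]
            rfl
          · have e1 : ∀ e ∈ C, (if (e.1.1.getLast? = some x ∧ e.1.2.head? = some y) then e.2 else 0) = 0 := by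
              intro e he
              rw [if_neg]
              rintro ⟨hgl, -⟩
              rw [(hCpath e he).2.2.1] at hgl
              exact hxv (Option.some.inj hgl).symm
            have e2 : ∀ r ∈ Dv, (if ((preAt v r.1).getLast? = some x ∧ (postAt v r.1).head? = some y) then r.2 else 0) = 0 := by
              intro r _
              rw [if_neg]
              rintro ⟨hgl, -⟩
              rw [hprelast r] at hgl
              exact hxv (Option.some.inj hgl).symm
            rw [List.map_congr_left e1, List.map_congr_left e2]
            simp
        have h7 : G.coverWeight [x,y] Dv
            = ((Dv.map (fun e => if [x,y] <:+: preAt v e.1 then e.2 else 0)).sum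
              + (Dv.map (fun e => if [x,y] <:+: postAt v e.1 then e.2 else 0)).sum)
              + (Dv.map (fun e => if ((preAt v e.1).getLast? = some x ∧ (postAt v e.1).head? = some y) then e.2 else 0)).sum := by
          have e1 : ∀ r ∈ Dv, (if [x,y] <:+: r.1 then r.2 else 0)
              = ((if [x,y] <:+: preAt v r.1 then r.2 else 0) + (if [x,y] <:+: postAt v r.1 then r.2 else 0))
                + (if ((preAt v r.1).getLast? = some x ∧ (postAt v r.1).head? = some y) then r.2 else 0) := by
            intro r hr
            have hnd2 : (preAt v r.1 ++ postAt v r.1).Nodup := by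
              rw [hsplit r hr]; exact hndr r hr
            have := pair_indicator_append (A := preAt v r.1) (B := postAt v r.1) (x := x) (y := y) hnd2 r.2
            rw [hsplit r hr] at this
            exact this
          unfold coverWeight
          rw [List.map_congr_left e1, List.sum_map_add, List.sum_map_add]
        have hDNv : G.coverWeight [x,y] DN = G.coverWeight [x,y] Dv := by
          rw [h1, h3, h4, h5, h6, ← h7]
        rw [hD, G.cw_append, hDNv]
        rw [← G.cw_edge_eq_f hD' x y, hsplitD']
        ring
    refine ⟨D, hDdecomp, ?_⟩
    -- bound the coverage of P
    have hPDo : G.coverWeight (u :: v :: w :: t) Do = 0 := by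
      apply G.cw_eq_zero
      intro e he hinf
      exact hvnot e he (hinf.subset (by simp))
    rw [hD, G.cw_append, hPDo, zero_add]
    rw [hcwDN]
    have hPocc : ∀ e ∈ C, (if (u :: v :: w :: t) <:+: e.1.1 ++ e.1.2 then e.2 else 0)
        = (if badA e.1.1 ∧ badB e.1.2 then e.2 else 0) := by
      intro e he
      have hf := hCpath e he
      refine if_congr ?_ rfl rfl
      exact infix_cons_cons_append hf.2.1 hndP (by simp) hf.2.2.1
    rw [List.map_congr_left hPocc]
    have hstructA : ∃ A₁ A₂, LA = A₁ ++ A₂ ∧ (∀ e ∈ A₁, badA e.1) ∧ (∀ e ∈ A₂, ¬ badA e.1) := by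
      refine ⟨(Dv.filter (fun e => decide (badA (preAt v e.1)))).map pc,
        (Dv.filter (fun e => ! decide (badA (preAt v e.1)))).map pc, by rw [hLA, List.map_append], ?_, ?_⟩
      · intro e he
        obtain ⟨r, hr, rfl⟩ := List.mem_map.mp he
        have := (List.mem_filter.mp hr).2
        simpa using this
      · intro e he
        obtain ⟨r, hr, rfl⟩ := List.mem_map.mp he
        have := (List.mem_filter.mp hr).2
        simpa using this
    have hstructB : ∃ B₁ B₂, LB = B₁ ++ B₂ ∧ (∀ e ∈ B₁, ¬ badB e.1) ∧ (∀ e ∈ B₂, badB e.1) := by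
      refine ⟨(Dv.filter (fun e => ! decide (badB (postAt v e.1)))).map qc,
        (Dv.filter (fun e => decide (badB (postAt v e.1)))).map qc, by rw [hLB, List.map_append], ?_, ?_⟩
      · intro e he
        obtain ⟨r, hr, rfl⟩ := List.mem_map.mp he
        have := (List.mem_filter.mp hr).2
        simpa using this
      · intro e he
        obtain ⟨r, hr, rfl⟩ := List.mem_map.mp he
        have := (List.mem_filter.mp hr).2
        simpa using this
    have hbb := couple_badbad badA badB hnnLA hnnLB htot hstructA hstructB
    -- identify the three sums
    have hDvcw : ∀ p : List V, v ∈ p →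
        G.coverWeight p Dv = G.coverWeight p D' := by
      intro p hvp
      have := G.cw_filter_partition p D' (fun e => decide (v ∈ e.1))
      have hz : G.coverWeight p Do = 0 := by
        apply G.cw_eq_zero
        intro e he hinf
        exact hvnot e he (hinf.subset hvp)
      rw [this, hz, add_zero]
    have hαsum : (LA.map (fun e => if badA e.1 then e.2 else 0)).sum = G.f u v := by
      rw [(hpermA.map _).sum_eq, List.map_map]
      have e1 : ∀ r ∈ Dv, ((fun e => if badA e.1 then e.2 else 0) ∘ pc) r
          = (if [u,v] <:+: r.1 then r.2 else 0) := by
        intro r hr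
        show (if badA (preAt v r.1) then r.2 else 0) = _
        refine if_congr ?_ rfl rfl
        rw [hbadA]
        show [u,v] <:+ (preAt v r.1) ↔ _
        constructor
        · intro h
          exact h.isInfix.trans ⟨[], postAt v r.1, by rw [List.nil_append]; exact hsplit r hr⟩
        · intro h
          obtain ⟨s, t₂, hst⟩ := h
          have hocc : r.1 = (s ++ [u]) ++ v :: t₂ := by rw [← hst]; simp
          obtain ⟨hpre, -⟩ := eq_pre_post (hndr r hr) hocc
          rw [hpre]
          exact ⟨s, by simp⟩
      rw [List.map_congr_left e1]
      have : (Dv.map (fun r => if [u,v] <:+: r.1 then r.2 else 0)).sum = G.coverWeight [u,v] Dv := rfl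
      rw [this, hDvcw [u,v] (by simp), G.cw_edge_eq_f hD' u v]
    have hβsum : (LB.map (fun e => if badB e.1 then e.2 else 0)).sum = G.coverWeight (v :: w :: t) D' := by
      rw [(hpermB.map _).sum_eq, List.map_map]
      have e1 : ∀ r ∈ Dv, ((fun e => if badB e.1 then e.2 else 0) ∘ qc) r
          = (if (v :: w :: t) <:+: r.1 then r.2 else 0) := by
        intro r hr
        show (if badB (postAt v r.1) then r.2 else 0) = _
        refine if_congr ?_ rfl rfl
        rw [hbadB]
        show (w :: t) <+: (postAt v r.1) ↔ _
        constructor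
        · intro h
          obtain ⟨rest, hrest⟩ := h
          obtain ⟨A₀, hA₀⟩ := List.getLast?_eq_some_iff.mp (hprelast r)
          refine ⟨A₀, rest, ?_⟩
          rw [← hsplit r hr, hA₀, ← hrest]
          simp
        · intro h
          obtain ⟨s, t₂, hst⟩ := h
          have hocc : r.1 = s ++ v :: ((w :: t) ++ t₂) := by rw [← hst]; simp
          obtain ⟨-, hpost⟩ := eq_pre_post (hndr r hr) hocc
          rw [hpost]
          exact ⟨t₂, rfl⟩
      rw [List.map_congr_left e1]
      have : (Dv.map (fun r => if (v :: w :: t) <:+: r.1 then r.2 else 0)).sum = G.coverWeight (v :: w :: t) Dv := rfl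
      rw [this, hDvcw (v :: w :: t) (by simp)]
    have hT : (LB.map (fun e => e.2)).sum = G.fout v := by
      rw [htotB]
      have e1 : ∀ r ∈ Dv, (fun e : List V × ℚ => e.2) r = ∑ z, (if [v,z] <:+: r.1 then r.2 else 0) := by
        intro r hr
        rw [G.sum_ite_infix_out (hndr r hr) v r.2]
        rw [if_pos]
        obtain ⟨s, t₀, hst⟩ := List.append_of_mem (hvmem r hr)
        cases t₀ with
        | nil =>
          exfalso
          have hlast : r.1.getLast? = some v := by rw [hst]; simp
          exact (G.decomp_entry_facts hD' (hDvD' r hr)).2.2.2.2.2 v hlast w hEvw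
        | cons z t₁ =>
          exact ⟨z, s, t₁, by rw [hst]; simp⟩
      rw [List.map_congr_left e1, sum_map_finset_sum]
      unfold fout
      apply Finset.sum_congr rfl
      intro z _
      have : (Dv.map (fun r => if [v,z] <:+: r.1 then r.2 else 0)).sum = G.coverWeight [v,z] Dv := rfl
      rw [this, hDvcw [v,z] (by simp), G.cw_edge_eq_f hD' v z]
    rw [hαsum, hβsum, hT] at hbb
    have hfinout := G.fin_eq_fout ⟨u, hEuv⟩ ⟨w, hEvw⟩
    have hfuvle : G.f u v ≤ G.fin v :=
      Finset.single_le_sum (fun z _ => G.f_nonneg z v) (Finset.mem_univ u)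
    refine le_trans hbb ?_
    rw [excess_step]
    rcases le_or_gt 0 (G.excess (v :: w :: t)) with hpos | hneg
    · have hM : max (G.excess (v :: w :: t)) 0 = G.excess (v :: w :: t) := max_eq_left hpos
      rw [hM] at hcwD'
      have harg : G.f u v + G.coverWeight (v :: w :: t) D' - G.fout v
          ≤ G.excess (v :: w :: t) + G.f u v - G.fout v := by linarith
      exact max_le_max harg (le_refl 0)
    · have hM : max (G.excess (v :: w :: t)) 0 = 0 := max_eq_right (le_of_lt hneg)
      rw [hM] at hcwD'
      have h0 : max (G.f u v + G.coverWeight (v :: w :: t) D' - G.fout v) 0 = 0 := by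
        apply max_eq_right
        linarith
      rw [h0]
      exact le_max_right _ _
  
end FlowGraph

namespace FlowGraph
variable {V : Type} [Fintype V] [DecidableEq V]

theorem isPath_cons_cons (G : FlowGraph V) {p : List V} (hpath : G.IsPath p) :
    ∃ u v Q, p = u :: v :: Q := by
  obtain ⟨hlen, -⟩ := hpath
  cases p with
  | nil => simp at hlen
  | cons a p' =>
    cases p' with
    | nil => simp at hlen
    | cons b Q => exact ⟨a, b, Q, rfl⟩

theorem safe_pos_excess (G : FlowGraph V) {p : List V} (hsafe : G.IsSafe p) :
    0 < G.excess p := by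
  obtain ⟨hpath, w₀, hw₀, hWsafe⟩ := hsafe
  obtain ⟨u, v, Q, rfl⟩ := G.isPath_cons_cons hpath
  obtain ⟨D, hD, hcw⟩ := G.exists_min_cover Q u v hpath
  have hW := hWsafe D hD
  by_contra hneg
  push_neg at hneg
  rw [max_eq_right hneg] at hcw
  linarith

theorem safe_of_excess_pos (G : FlowGraph V) {p : List V} (hpath : G.IsPath p)
    (hpos : 0 < G.excess p) : G.IsSafe p := by
  refine ⟨hpath, G.excess p, hpos, ?_⟩
  intro D hD
  obtain ⟨u, v, Q, rfl⟩ := G.isPath_cons_cons hpath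
  exact G.excess_le_cw hD Q u v hpath

end FlowGraph

open FlowGraph in
/-- replacing the first (resp. last) edge of a safe path by a sibling edge of
at least the same flow yields a safe path, whose excess flow equals
`f_P − f(e) + f(e*) ≥ f_P > 0`. -/
theorem stmt_8 {V : Type} [Fintype V] [DecidableEq V] (G : FlowGraph V) :
    (∀ (u₁ u₂ x : V) (rest : List V), G.IsSafe (u₁ :: u₂ :: rest) →
      G.E x u₂ → G.f u₁ u₂ ≤ G.f x u₂ →
      G.IsSafe (x :: u₂ :: rest) ∧
      G.excess (x :: u₂ :: rest)
        = G.excess (u₁ :: u₂ :: rest) - G.f u₁ u₂ + G.f x u₂ ∧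
      G.excess (u₁ :: u₂ :: rest) ≤ G.excess (x :: u₂ :: rest) ∧
      0 < G.excess (u₁ :: u₂ :: rest)) ∧
    (∀ (a b y : V) (q : List V), G.IsSafe (q ++ [a, b]) →
      G.E a y → G.f a b ≤ G.f a y →
      G.IsSafe (q ++ [a, y]) ∧
      G.excess (q ++ [a, y]) = G.excess (q ++ [a, b]) - G.f a b + G.f a y ∧
      G.excess (q ++ [a, b]) ≤ G.excess (q ++ [a, y]) ∧
      0 < G.excess (q ++ [a, b])) := by
  constructor
  · intro u₁ u₂ x rest hsafe hEx hle
    have hpath := hsafe.1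
    have hpos := G.safe_pos_excess hsafe
    have hid : G.excess (x :: u₂ :: rest)
        = G.excess (u₁ :: u₂ :: rest) - G.f u₁ u₂ + G.f x u₂ := by
      rw [G.excess_eq, G.excess_eq]
      ring
    have hineq : G.excess (u₁ :: u₂ :: rest) ≤ G.excess (x :: u₂ :: rest) := by
      rw [hid]; linarith
    have hpath' : G.IsPath (x :: u₂ :: rest) := by
      refine ⟨by simp, ?_⟩
      rw [List.chain'_cons]
      exact ⟨hEx, (List.chain'_cons.mp hpath.2).2⟩
    exact ⟨G.safe_of_excess_pos hpath' (by linarith), hid, hineq, hpos⟩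
  · intro a b y q hsafe hEy hle
    have hpath := hsafe.1
    have hpos := G.safe_pos_excess hsafe
    have hid : G.excess (q ++ [a, y]) = G.excess (q ++ [a, b]) - G.f a b + G.f a y :=
      G.excess_last q a b y
    have hineq : G.excess (q ++ [a, b]) ≤ G.excess (q ++ [a, y]) := by
      rw [hid]; linarith
    have hpath' : G.IsPath (q ++ [a, y]) := by
      refine ⟨by simp, ?_⟩
      have hsp : q ++ [a, b] = (q ++ [a]) ++ [b] := by simp
      have hch := hpath.2
      rw [hsp, List.chain'_append] at hch
      have hsp2 : q ++ [a, y] = (q ++ [a]) ++ [y] := by simp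
      rw [hsp2, List.chain'_append]
      refine ⟨hch.1, by simp [List.Chain'], ?_⟩
      intro x hx y' hy'
      simp at hy'
      subst hy'
      have hlast : (q ++ [a]).getLast? = some a := List.getLast?_concat
      rw [hlast] at hx
      have hax : a = x := Option.some.inj (Option.mem_def.mp hx)
      rw [← hax]
      exact hEy
    exact ⟨G.safe_of_excess_pos hpath' (by linarith), hid, hineq, hpos⟩
end

section
/- In a flow graph, for every vertex v, the vertices of the funnel F_v having a unique sink path form a converging in-tree rooted at v: every vertex x ≠ v of F_v that has a unique sink path in F_v has exactly one outgoing edge in F_v, and the head of that edge also has a unique sink path in F_v. Consequently, once any path of F_v reaches a vertex with a unique sink path, all of its subsequent vertices have unique sink paths. -/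
namespace FlowGraph

variable {V : Type} [Fintype V] [DecidableEq V] (G : FlowGraph V)

/-- A left-maximal safe path ending at `v`: a safe path whose last vertex is `v`
and which cannot be prepended by an edge of `G` while remaining safe. -/
def IsLeftMaxSafeTo (v : V) (p : List V) : Prop :=
  G.IsSafe p ∧ p.getLast? = some v ∧
  ∀ u x, p.head? = some x → G.E u x → ¬ G.IsSafe (u :: p)

/-- `x` is a vertex of the funnel `F_v` : it lies on some left-maximal safe path
ending at `v`. -/
def FunnelVertex (v x : V) : Prop :=
  ∃ p, G.IsLeftMaxSafeTo v p ∧ x ∈ p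

/-- `(x,y)` is an edge of the funnel `F_v`. -/
def FunnelEdge (v x y : V) : Prop :=
  ∃ p, G.IsLeftMaxSafeTo v p ∧ [x, y] <:+: p

/-- A (possibly single-vertex) path inside the funnel `F_v`. -/
def FunnelPath (v : V) (p : List V) : Prop :=
  p ≠ [] ∧ (∀ x ∈ p, G.FunnelVertex v x) ∧ p.Chain' (G.FunnelEdge v)

/-- A source of the funnel `F_v`: a funnel vertex with no incoming funnel edge. -/
def FunnelSource (v s : V) : Prop :=
  G.FunnelVertex v s ∧ ∀ y, ¬ G.FunnelEdge v y s

/-- A source path of `x` within `F_v`: a path in `F_v` from a source of `F_v` to `x`. -/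
def FunnelSourcePath (v x : V) (p : List V) : Prop :=
  G.FunnelPath v p ∧ (∀ s ∈ p.head?, G.FunnelSource v s) ∧ p.getLast? = some x

/-- A sink path of `x` within `F_v`: a path in `F_v` from `x` to `v`. -/
def FunnelSinkPath (v x : V) (p : List V) : Prop :=
  G.FunnelPath v p ∧ p.head? = some x ∧ p.getLast? = some v

end FlowGraph

/-!
Every funnel edge `(x, y)` lies on a left-maximal safe path ending at `v`, whose suffix from `y`
is a sink path of `y`; and prepending `x` to any sink path of `y` gives a sink path of `x`.
Hence if `x` has a unique sink path `p`, then `p = x :: q` for every sink path `q` of every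
out-neighbour `y` of `x`, which pins down both `y` and `q`.
-/

namespace FlowGraph

variable {V : Type} [Fintype V] [DecidableEq V] {G : FlowGraph V} {v : V}

lemma IsLeftMaxSafeTo.isChain_funnelEdge {p : List V} (hp : G.IsLeftMaxSafeTo v p) :
    p.IsChain (G.FunnelEdge v) :=
  (List.isChain_isInfix p).imp fun _ _ h => ⟨p, hp, h⟩

lemma IsLeftMaxSafeTo.funnelSinkPath {s t : List V} {x : V}
    (hp : G.IsLeftMaxSafeTo v (s ++ x :: t)) : G.FunnelSinkPath v x (x :: t) := by
  refine ⟨⟨List.cons_ne_nil _ _, fun a ha => ⟨_, hp, List.mem_append_right _ ha⟩, ?_⟩, rfl, ?_⟩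
  · exact hp.isChain_funnelEdge.suffix (List.suffix_append _ _)
  · simpa only [List.getLast?_append_cons] using hp.2.1

lemma FunnelEdge.funnelVertex_left {x y : V} (he : G.FunnelEdge v x y) : G.FunnelVertex v x := by
  obtain ⟨p, hp, hxy⟩ := he
  exact ⟨p, hp, hxy.mem List.mem_cons_self⟩

lemma FunnelEdge.exists_funnelSinkPath {x y : V} (he : G.FunnelEdge v x y) :
    ∃ q, G.FunnelSinkPath v y q := by
  obtain ⟨p, hp, s, t, rfl⟩ := he
  exact ⟨_, IsLeftMaxSafeTo.funnelSinkPath (s := s ++ [x]) (by simpa using hp)⟩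

lemma FunnelSinkPath.cons {x y : V} {q : List V} (he : G.FunnelEdge v x y)
    (hq : G.FunnelSinkPath v y q) : G.FunnelSinkPath v x (x :: q) := by
  obtain ⟨⟨hne, hvert, hchain⟩, hhead, hlast⟩ := hq
  obtain ⟨y, q, rfl⟩ := List.exists_cons_of_ne_nil hne
  obtain rfl : y = _ := Option.some_injective _ hhead
  refine ⟨⟨List.cons_ne_nil _ _, ?_, List.isChain_cons_cons.2 ⟨he, hchain⟩⟩, rfl, ?_⟩
  · exact List.forall_mem_cons.2 ⟨he.funnelVertex_left, hvert⟩
  · simpa only [List.getLast?_cons_cons] using hlast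

lemma FunnelSinkPath.exists_funnelEdge {x : V} {p : List V} (hp : G.FunnelSinkPath v x p)
    (hxv : x ≠ v) : ∃ y, G.FunnelEdge v x y := by
  obtain ⟨⟨-, -, hchain⟩, hhead, hlast⟩ := hp
  match p, hhead, hlast, hchain with
  | [_], rfl, hlast, _ => exact absurd (Option.some_injective _ hlast) hxv
  | _ :: y :: _, rfl, _, hchain => exact ⟨y, (List.isChain_cons_cons.1 hchain).1⟩

lemma FunnelSinkPath.eq_of_existsUnique {x y₁ y₂ : V} {q₁ q₂ : List V}
    (huniq : ∃! p, G.FunnelSinkPath v x p) (he₁ : G.FunnelEdge v x y₁) (he₂ : G.FunnelEdge v x y₂)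
    (hq₁ : G.FunnelSinkPath v y₁ q₁) (hq₂ : G.FunnelSinkPath v y₂ q₂) : q₁ = q₂ :=
  List.cons_injective (huniq.unique (hq₁.cons he₁) (hq₂.cons he₂))

lemma FunnelEdge.existsUnique_funnelSinkPath {x y : V} (he : G.FunnelEdge v x y)
    (huniq : ∃! p, G.FunnelSinkPath v x p) : ∃! q, G.FunnelSinkPath v y q := by
  obtain ⟨q, hq⟩ := he.exists_funnelSinkPath
  exact ⟨q, hq, fun q' hq' => hq'.eq_of_existsUnique huniq he he hq⟩

lemma FunnelEdge.right_eq_of_existsUnique {x y₁ y₂ : V} (he₁ : G.FunnelEdge v x y₁)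
    (he₂ : G.FunnelEdge v x y₂) (huniq : ∃! p, G.FunnelSinkPath v x p) : y₁ = y₂ := by
  obtain ⟨q₁, hq₁⟩ := he₁.exists_funnelSinkPath
  obtain ⟨q₂, hq₂⟩ := he₂.exists_funnelSinkPath
  obtain rfl := hq₁.eq_of_existsUnique huniq he₁ he₂ hq₂
  exact Option.some_injective _ (hq₁.2.1.symm.trans hq₂.2.1)

end FlowGraph

open FlowGraph in
/-- the vertices of `F_v` with a unique sink path form a converging in-tree
rooted at `v`: every such vertex `x ≠ v` has exactly one outgoing funnel edge, whose head
also has a unique sink path; consequently once a funnel path reaches a vertex with a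
unique sink path, all subsequent vertices have unique sink paths. -/
theorem stmt_11 {V : Type} [Fintype V] [DecidableEq V] (G : FlowGraph V) (v : V) :
    (∀ x : V, G.FunnelVertex v x → x ≠ v → (∃! p : List V, G.FunnelSinkPath v x p) →
      (∃! y : V, G.FunnelEdge v x y) ∧
      (∀ y : V, G.FunnelEdge v x y → ∃! p : List V, G.FunnelSinkPath v y p)) ∧
    (∀ (q₁ q₂ : List V) (x : V), G.FunnelPath v (q₁ ++ x :: q₂) →
      (∃! p : List V, G.FunnelSinkPath v x p) →
      ∀ y ∈ q₂, ∃! p : List V, G.FunnelSinkPath v y p) := by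
  refine ⟨fun x _ hxv huniq => ⟨?_, fun y he => he.existsUnique_funnelSinkPath huniq⟩,
    fun q₁ q₂ x hpath huniq => ?_⟩
  · obtain ⟨p, hp⟩ := huniq.exists
    obtain ⟨y, he⟩ := hp.exists_funnelEdge hxv
    exact ⟨y, he, fun y' he' => he'.right_eq_of_existsUnique he huniq⟩
  · have hchain : (x :: q₂).IsChain (G.FunnelEdge v) := hpath.2.2.suffix (List.suffix_append _ _)
    exact hchain.cons_induction _ _ (fun _ _ he hu => he.existsUnique_funnelSinkPath hu) huniq
end
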